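/- arXiv:2211.15517 — 10 statements merged into one kernel-verified Lean document; each statement's English description precedes it below -/
import Mathlib

section
/- Let G1 and G2 be nontrivial finite groups and let G = G1 × G2. If either gcd(|G1|,|G2|) = 1, or both G1 and G2 fail to be of prime power order (neither is a p-group for any prime p), then G is abelian if and only if G is a PNC-group. -/
open Subgroup
open scoped commutatorElement

/-- The key property: normalizer equals centralizer for all abelian subgroups. -/
def NCProp (G : Type*) [Group G] : Prop :=
  ∀ A : Subgroup G, IsMulCommutative A → Subgroup.normalizer (A : Set G) = Subgroup.centralizer (A : Set G)

lemma my_centralizer_le_normalizer {G : Type*} [Group G] (H : Subgroup G) :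
    Subgroup.centralizer (H : Set G) ≤ Subgroup.normalizer (H : Set G) := by
  intro g hg
  rw [Subgroup.mem_normalizer_iff]
  intro h
  constructor
  · intro hh
    have hc : h * g = g * h := Subgroup.mem_centralizer_iff.mp hg h hh
    have : g * h * g⁻¹ = h := by rw [← hc]; group
    rwa [this]
  · intro hh
    have hc : (g * h * g⁻¹) * g = g * (g * h * g⁻¹) :=
      Subgroup.mem_centralizer_iff.mp hg _ hh
    have h1 : g * h = g * (g * h * g⁻¹) := by rw [← hc]; group
    have h2 : h = g * h * g⁻¹ := mul_left_cancel h1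
    rw [h2]; exact hh

/-- The NC-property passes to subgroups. -/
lemma NCProp.subgroup {G : Type*} [Group G] (hG : NCProp G) (S : Subgroup G) :
    NCProp S := by
  intro A hA
  apply le_antisymm _ (my_centralizer_le_normalizer A)
  intro g hg
  have hmap : IsMulCommutative (A.map S.subtype) := by haveI := hA; exact Subgroup.map_isMulCommutative A S.subtype
  have hgG : (g : G) ∈ Subgroup.normalizer ((A.map S.subtype : Subgroup G) : Set G) := by
    rw [Subgroup.mem_normalizer_iff]
    intro h
    constructor
    · rintro ⟨a, ha, rfl⟩
      refine ⟨g * a * g⁻¹, (Subgroup.mem_normalizer_iff.mp hg a).mp ha, rfl⟩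
    · rintro ⟨b, hb, hbe⟩
      have hbe' : (b : G) = (g : G) * h * (g : G)⁻¹ := hbe
      have hh' : h = ((g⁻¹ * b * g : S) : G) := by
        push_cast
        rw [hbe']; group
      have hhS : h ∈ S := by rw [hh']; exact SetLike.coe_mem _
      refine ⟨⟨h, hhS⟩, ?_, rfl⟩
      have hmem : g * ⟨h, hhS⟩ * g⁻¹ ∈ A := by
        have heq : g * (⟨h, hhS⟩ : S) * g⁻¹ = b := by
          apply Subtype.ext; push_cast; exact hbe'.symm
        rw [heq]; exact hb
      exact (Subgroup.mem_normalizer_iff.mp hg _).mpr hmem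
  rw [hG (A.map S.subtype) hmap] at hgG
  rw [Subgroup.mem_centralizer_iff]
  intro a ha
  apply Subtype.ext
  push_cast
  exact Subgroup.mem_centralizer_iff.mp hgG (a : G) ⟨a, ha, rfl⟩

/-- A finite p-group with the NC-property is abelian. -/
lemma NCProp.pgroup_comm {Q : Type*} [Group Q] [Finite Q] {p : ℕ} (hp : p.Prime)
    (hQ : IsPGroup p Q) (hNC : NCProp Q) (x y : Q) : x * y = y * x := by
  suffices hcen : ∀ z : Q, z ∈ Subgroup.center Q by
    exact (Subgroup.mem_center_iff.mp (hcen y)) x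
  by_contra hc
  push_neg at hc
  obtain ⟨x₀, hx₀⟩ := hc
  haveI : Fact p.Prime := ⟨hp⟩
  set Z := Subgroup.center Q with hZ
  haveI : Nontrivial (Q ⧸ Z) := by
    refine ⟨⟨QuotientGroup.mk x₀, 1, ?_⟩⟩
    simp only [ne_eq, QuotientGroup.eq_one_iff]
    exact hx₀
  have hQZ : IsPGroup p (Q ⧸ Z) := hQ.to_quotient Z
  haveI : Nontrivial (Subgroup.center (Q ⧸ Z)) := hQZ.center_nontrivial
  obtain ⟨⟨xb, hxb⟩, hxb1⟩ := exists_ne (1 : Subgroup.center (Q ⧸ Z))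
  have hxbne : xb ≠ 1 := fun h => hxb1 (Subtype.ext h)
  obtain ⟨w, rfl⟩ := QuotientGroup.mk_surjective xb
  set B : Subgroup Q := (Subgroup.zpowers (QuotientGroup.mk w : Q ⧸ Z)).comap
    (QuotientGroup.mk' Z) with hB
  have hmemB : ∀ b : Q, b ∈ B ↔ (QuotientGroup.mk b : Q ⧸ Z) ∈
      Subgroup.zpowers (QuotientGroup.mk w : Q ⧸ Z) := fun b => Iff.rfl
  have zle : Subgroup.zpowers (QuotientGroup.mk w : Q ⧸ Z) ≤ Subgroup.center (Q ⧸ Z) :=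
    Subgroup.zpowers_le.mpr hxb
  -- every element of B is w^m * z with z central
  have hrep : ∀ b : Q, b ∈ B → ∃ (m : ℤ) (z : Q), z ∈ Z ∧ b = w ^ m * z := by
    intro b hb
    obtain ⟨m, hm⟩ := (hmemB b).mp hb
    refine ⟨m, (w ^ m)⁻¹ * b, ?_, by group⟩
    rw [hZ, ← QuotientGroup.eq_one_iff]
    have hmm : (QuotientGroup.mk (w ^ m) : Q ⧸ Z) = QuotientGroup.mk b := by
      rw [← hm]; rfl
    have : (QuotientGroup.mk ((w ^ m)⁻¹ * b) : Q ⧸ Z)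
        = (QuotientGroup.mk (w ^ m): Q ⧸ Z)⁻¹ * QuotientGroup.mk b := rfl
    rw [this, hmm]
    group
  have hBcomm : IsMulCommutative B := by
    constructor
    constructor
    rintro ⟨a, ha⟩ ⟨b, hb⟩
    apply Subtype.ext
    obtain ⟨m, z, hz, rfl⟩ := hrep a ha
    obtain ⟨n, u, hu, rfl⟩ := hrep b hb
    push_cast
    have hzc : ∀ q : Q, q * z = z * q := fun q => (Subgroup.mem_center_iff.mp hz q)
    have huc : ∀ q : Q, q * u = u * q := fun q => (Subgroup.mem_center_iff.mp hu q)
    have cz : ∀ q : Q, Commute q z := fun q => hzc q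
    have cu : ∀ q : Q, Commute q u := fun q => huc q
    exact Commute.mul_left
      (Commute.mul_right ((Commute.refl w).zpow_zpow m n) (cu _))
      (Commute.mul_right (cz _).symm (cz _).symm)
  -- B is normal, so its normalizer is ⊤, hence its centralizer is ⊤
  have hBnorm : Subgroup.normalizer (B : Set Q) = ⊤ := by
    rw [eq_top_iff]
    intro g _
    rw [Subgroup.mem_normalizer_iff]
    intro h
    rw [hmemB, hmemB]
    have hmk : (QuotientGroup.mk (g * h * g⁻¹) : Q ⧸ Z)
        = (QuotientGroup.mk g : Q ⧸ Z) * QuotientGroup.mk h * (QuotientGroup.mk g : Q ⧸ Z)⁻¹ := rfl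
    constructor
    · intro hh
      have hcent := Subgroup.mem_center_iff.mp (zle hh)
      rw [hmk, hcent, mul_inv_cancel_right]
      exact hh
    · intro hh
      have hcent := Subgroup.mem_center_iff.mp (zle hh)
      have : (QuotientGroup.mk h : Q ⧸ Z)
          = (QuotientGroup.mk g : Q ⧸ Z)⁻¹ *
            (QuotientGroup.mk (g * h * g⁻¹) : Q ⧸ Z) * QuotientGroup.mk g := by
        rw [hmk]; group
      rw [this, hcent, inv_mul_cancel_right]
      exact hh
  have hCtop : Subgroup.centralizer (B : Set Q) = ⊤ := by
    rw [← hNC B hBcomm]; exact hBnorm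
  -- then w is central, contradiction
  have hwB : w ∈ B := (hmemB w).mpr (Subgroup.mem_zpowers _)
  have hwZ : w ∈ Z := by
    rw [hZ, Subgroup.mem_center_iff]
    intro g
    exact (Subgroup.mem_centralizer_iff.mp (hCtop ▸ Subgroup.mem_top g) w hwB).symm
  exact hxbne (QuotientGroup.eq_one_iff w |>.mpr hwZ)

/-- A finite group with the NC-property is abelian. -/
lemma NCProp.comm {K : Type*} [Group K] [Finite K] (hNC : NCProp K) (x y : K) :
    x * y = y * x := by
  have hc : ⁅x, y⁆ = 1 := by
    by_contra hc
    have h1 : orderOf ⁅x, y⁆ ≠ 1 := by simpa [orderOf_eq_one_iff] using hc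
    obtain ⟨p, hp, hpd⟩ := Nat.exists_prime_and_dvd h1
    haveI : Fact p.Prime := ⟨hp⟩
    have hpK : p ∣ Nat.card K := hpd.trans (orderOf_dvd_natCard _)
    obtain ⟨P⟩ : Nonempty (Sylow p K) := inferInstance
    -- the Sylow subgroup is abelian
    have hPcomm : ∀ a b : (P : Subgroup K), a * b = b * a := fun a b =>
      NCProp.pgroup_comm hp P.isPGroup' (hNC.subgroup (P : Subgroup K)) a b
    have hPic : IsMulCommutative (P : Subgroup K) := ⟨⟨hPcomm⟩⟩
    have hP : Subgroup.normalizer ((P : Subgroup K) : Set K) ≤ Subgroup.centralizer ((P : Subgroup K) : Set K) :=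
      le_of_eq (hNC (P : Subgroup K) hPic)
    -- Burnside's normal p-complement theorem
    have hker : ⁅x, y⁆ ∈ (MonoidHom.transferSylow P hP).ker := by
      rw [MonoidHom.mem_ker, map_commutatorElement]
      exact commutatorElement_eq_one_iff_commute.mpr (hPcomm _ _)
    have hdvd : orderOf ⁅x, y⁆ ∣ Nat.card (MonoidHom.transferSylow P hP).ker :=
      Subgroup.orderOf_dvd_natCard _ hker
    exact MonoidHom.not_dvd_card_ker_transferSylow P hP (hpd.trans hdvd)
  have := commutatorElement_eq_one_iff_commute.mp hc
  exact this


/-- A finite group `G` is a PNC-group if for every abelian subgroup `H` of `G` whose order is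
not a prime power (i.e. `H` is not a `p`-group for any prime `p`), the normalizer of `H`
equals the centralizer of `H`. -/
def IsPNCGroup (G : Type*) [Group G] : Prop :=
  ∀ H : Subgroup G, IsMulCommutative H →
    (∀ p : ℕ, p.Prime → ¬ IsPGroup p H) →
      Subgroup.normalizer (H : Set G) = Subgroup.centralizer (H : Set G)

/-- From the PNC property of a product, derive the NC-property of the left factor,
provided for every prime divisor of `|G₁|` there is a different prime dividing `|G₂|`. -/
lemma ncprop_left_of_pnc {G₁ G₂ : Type*} [Group G₁] [Group G₂] [Finite G₁] [Finite G₂]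
    (hPNC : IsPNCGroup (G₁ × G₂))
    (hprime : ∀ q : ℕ, q.Prime → q ∣ Nat.card G₁ →
      ∃ r : ℕ, r.Prime ∧ r ∣ Nat.card G₂ ∧ r ≠ q) :
    NCProp G₁ := by
  intro A hA
  apply le_antisymm _ (my_centralizer_le_normalizer A)
  by_cases hcard : Nat.card A = 1
  · have hbot : A = ⊥ := Subgroup.card_eq_one.mp hcard
    intro g _
    rw [Subgroup.mem_centralizer_iff]
    intro m hm
    rw [hbot] at hm
    have : m = 1 := hm
    simp [this]
  · obtain ⟨q, hq, hqd⟩ := Nat.exists_prime_and_dvd hcard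
    obtain ⟨r, hr, hrd, hrq⟩ := hprime q hq (hqd.trans (Subgroup.card_subgroup_dvd_card A))
    haveI : Fact r.Prime := ⟨hr⟩
    obtain ⟨b, hb⟩ := exists_prime_orderOf_dvd_card' r hrd
    set B : Subgroup G₂ := Subgroup.zpowers b with hBdef
    have hcardB : Nat.card B = r := by rw [hBdef, Nat.card_zpowers, hb]
    set H : Subgroup (G₁ × G₂) := A.prod B with hHdef
    have hHcomm : IsMulCommutative H := by
      constructor; constructor
      rintro ⟨x, hx⟩ ⟨y, hy⟩
      apply Subtype.ext
      have hx' := Subgroup.mem_prod.mp hx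
      have hy' := Subgroup.mem_prod.mp hy
      haveI := hA
      have hcA : x.1 * y.1 = y.1 * x.1 :=
        Subgroup.mul_comm_of_mem_isMulCommutative (H := A) hx'.1 hy'.1
      have hcB : x.2 * y.2 = y.2 * x.2 :=
        Subgroup.mul_comm_of_mem_isMulCommutative (H := B) hx'.2 hy'.2
      show x * y = y * x
      exact Prod.ext hcA hcB
    have hHcard : Nat.card H = Nat.card A * r := by
      rw [← hcardB]
      exact (Nat.card_congr (Subgroup.prodEquiv A B).toEquiv).trans (Nat.card_prod _ _)
    have hHnp : ∀ p : ℕ, p.Prime → ¬ IsPGroup p H := by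
      intro p hp hpg
      haveI : Fact p.Prime := ⟨hp⟩
      obtain ⟨n, hn⟩ := IsPGroup.iff_card.mp hpg
      rw [hHcard] at hn
      have hq' : q = p := by
        have hd : q ∣ p ^ n := hn ▸ hqd.trans (dvd_mul_right _ r)
        exact (Nat.prime_dvd_prime_iff_eq hq hp).mp (hq.dvd_of_dvd_pow hd)
      have hr' : r = p := by
        have hd : r ∣ p ^ n := hn ▸ dvd_mul_left r (Nat.card A)
        exact (Nat.prime_dvd_prime_iff_eq hr hp).mp (hr.dvd_of_dvd_pow hd)
      exact hrq (hr'.trans hq'.symm)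
    have heq := hPNC H hHcomm hHnp
    intro g hg
    have hgn : ((g, 1) : G₁ × G₂) ∈ Subgroup.normalizer (H : Set (G₁ × G₂)) := by
      rw [Subgroup.mem_normalizer_iff]
      rintro ⟨m1, m2⟩
      constructor
      · rintro ⟨hm1, hm2⟩
        refine ⟨?_, ?_⟩
        · show g * m1 * g⁻¹ ∈ A
          exact (Subgroup.mem_normalizer_iff.mp hg m1).mp hm1
        · show 1 * m2 * 1⁻¹ ∈ B
          simpa using hm2
      · rintro ⟨hm1, hm2⟩
        refine ⟨?_, ?_⟩
        · exact (Subgroup.mem_normalizer_iff.mp hg m1).mpr hm1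
        · have : (1 : G₂) * m2 * 1⁻¹ ∈ B := hm2
          simpa using this
    rw [heq] at hgn
    rw [Subgroup.mem_centralizer_iff]
    intro m hm
    have hcm := Subgroup.mem_centralizer_iff.mp hgn (m, 1) ⟨hm, B.one_mem⟩
    exact congrArg Prod.fst hcm

/-- If `G₁` and `G₂` are nontrivial finite groups and either their orders are coprime or
neither is of prime power order, then `G₁ × G₂` is abelian iff it is a PNC-group. -/
theorem abelian_iff_isPNCGroup_of_prod (G₁ G₂ : Type*) [Group G₁] [Group G₂]
    [Finite G₁] [Finite G₂] [Nontrivial G₁] [Nontrivial G₂]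
    (h : Nat.gcd (Nat.card G₁) (Nat.card G₂) = 1 ∨
      ((∀ p : ℕ, p.Prime → ¬ IsPGroup p G₁) ∧ (∀ p : ℕ, p.Prime → ¬ IsPGroup p G₂))) :
    (∀ a b : G₁ × G₂, a * b = b * a) ↔ IsPNCGroup (G₁ × G₂) := by
  constructor
  · intro hcomm H _ _
    apply le_antisymm _ (my_centralizer_le_normalizer H)
    intro g _
    rw [Subgroup.mem_centralizer_iff]
    intro m _
    exact hcomm m g
  · intro hPNC
    -- prime selection hypotheses
    have hprime₁ : ∀ q : ℕ, q.Prime → q ∣ Nat.card G₁ →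
        ∃ r : ℕ, r.Prime ∧ r ∣ Nat.card G₂ ∧ r ≠ q := by
      intro q hq hqd
      rcases h with hco | ⟨h1, h2⟩
      · have hG₂ : Nat.card G₂ ≠ 1 :=
          ((Finite.one_lt_card_iff_nontrivial (α := G₂)).mpr inferInstance).ne'
        obtain ⟨r, hr, hrd⟩ := Nat.exists_prime_and_dvd hG₂
        refine ⟨r, hr, hrd, ?_⟩
        rintro rfl
        exact hr.ne_one (Nat.eq_one_of_dvd_one (hco ▸ Nat.dvd_gcd hqd hrd))
      · by_contra hcon
        push_neg at hcon
        have hall : ∀ {d : ℕ}, d.Prime → d ∣ Nat.card G₂ → d = q := by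
          intro d hd hdd
          exact hcon d hd hdd
        have hpos : Nat.card G₂ ≠ 0 := Nat.card_pos.ne'
        have : Nat.card G₂ = q ^ (Nat.card G₂).primeFactorsList.length :=
          Nat.eq_prime_pow_of_unique_prime_dvd hpos hall
        exact h2 q hq (IsPGroup.of_card this)
    have hprime₂ : ∀ q : ℕ, q.Prime → q ∣ Nat.card G₂ →
        ∃ r : ℕ, r.Prime ∧ r ∣ Nat.card G₁ ∧ r ≠ q := by
      intro q hq hqd
      rcases h with hco | ⟨h1, h2⟩
      · have hG₁ : Nat.card G₁ ≠ 1 :=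
          ((Finite.one_lt_card_iff_nontrivial (α := G₁)).mpr inferInstance).ne'
        obtain ⟨r, hr, hrd⟩ := Nat.exists_prime_and_dvd hG₁
        refine ⟨r, hr, hrd, ?_⟩
        rintro rfl
        exact hr.ne_one (Nat.eq_one_of_dvd_one (hco ▸ Nat.dvd_gcd hrd hqd))
      · by_contra hcon
        push_neg at hcon
        have hall : ∀ {d : ℕ}, d.Prime → d ∣ Nat.card G₁ → d = q := by
          intro d hd hdd
          exact hcon d hd hdd
        have hpos : Nat.card G₁ ≠ 0 := Nat.card_pos.ne'
        have : Nat.card G₁ = q ^ (Nat.card G₁).primeFactorsList.length :=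
          Nat.eq_prime_pow_of_unique_prime_dvd hpos hall
        exact h1 q hq (IsPGroup.of_card this)
    -- PNC transfers through the swap isomorphism
    have hPNC' : IsPNCGroup (G₂ × G₁) := by
      intro H hH hHnp
      set e : (G₂ × G₁) ≃* (G₁ × G₂) := MulEquiv.prodComm with he
      set H' : Subgroup (G₁ × G₂) := H.map e.toMonoidHom with hH'
      have hH'comm : IsMulCommutative H' := by haveI := hH; exact Subgroup.map_isMulCommutative H e.toMonoidHom
      have hH'np : ∀ p : ℕ, p.Prime → ¬ IsPGroup p H' := by
        intro p hp hpg
        exact hHnp p hp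
          (hpg.of_equiv (Subgroup.equivMapOfInjective H e.toMonoidHom e.injective).symm)
      have heq := hPNC H' hH'comm hH'np
      apply le_antisymm _ (my_centralizer_le_normalizer H)
      intro g hg
      have hg' : e g ∈ Subgroup.normalizer (H' : Set (G₁ × G₂)) := by
        rw [hH', ← Subgroup.map_equiv_normalizer_eq H e]
        exact ⟨g, hg, rfl⟩
      rw [heq] at hg'
      rw [Subgroup.mem_centralizer_iff]
      intro m hm
      have hm' : e m ∈ H' := ⟨m, hm, rfl⟩
      have hcm := Subgroup.mem_centralizer_iff.mp hg' (e m) hm'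
      have hme : e (m * g) = e (g * m) := by
        rw [map_mul, map_mul]; exact hcm
      exact e.injective hme
    have hNC₁ : NCProp G₁ := ncprop_left_of_pnc hPNC hprime₁
    have hNC₂ : NCProp G₂ := ncprop_left_of_pnc hPNC' hprime₂
    intro a c
    have h1 := hNC₁.comm a.1 c.1
    have h2 := hNC₂.comm a.2 c.2
    show (a.1 * c.1, a.2 * c.2) = (c.1 * a.1, c.2 * a.2)
    rw [h1, h2]
end

section
/- Let G be a finite non-abelian group. Then G is a nilpotent PNC-group if and only if G is a p-group for some prime p. -/
open Subgroup

section Aux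

variable {G : Type*} [Group G]

/-- Extending a commutative subgroup by a centralizing element stays commutative. -/
lemma aux_exists_comm_sup (A : Subgroup G) (hA : IsMulCommutative A) {x : G}
    (hx : x ∈ centralizer (A : Set G)) :
    ∃ B : Subgroup G, IsMulCommutative B ∧ A ≤ B ∧ x ∈ B := by
  have hcomm : ∀ a ∈ (A : Set G) ∪ {x}, ∀ b ∈ (A : Set G) ∪ {x}, a * b = b * a := by
    rintro a (ha | ha) b (hb | hb)
    · exact congrArg Subtype.val (hA.is_comm.comm ⟨a, ha⟩ ⟨b, hb⟩)
    · rw [Set.mem_singleton_iff] at hb; subst hb; exact hx a ha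
    · rw [Set.mem_singleton_iff] at ha; subst ha; exact (hx b hb).symm
    · rw [Set.mem_singleton_iff] at ha hb; subst ha; subst hb; rfl
  letI := closureCommGroupOfComm hcomm
  refine ⟨closure ((A : Set G) ∪ {x}), ⟨⟨fun a b => mul_comm a b⟩⟩,
    fun a ha => subset_closure (Or.inl ha), subset_closure (Or.inr rfl)⟩

/-- There is a maximal commutative subgroup, and it is self-centralizing. -/
lemma aux_exists_maximal_comm [Finite G] :
    ∃ A : Subgroup G, IsMulCommutative A ∧ centralizer (A : Set G) = A := by
  have hfin : {H : Subgroup G | IsMulCommutative H}.Finite := Set.toFinite _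
  have hbot : IsMulCommutative (⊥ : Subgroup G) :=
    ⟨⟨fun a b => Subtype.ext (by
      simp [Subgroup.coe_mul, Subgroup.mem_bot.mp a.2, Subgroup.mem_bot.mp b.2])⟩⟩
  obtain ⟨A, hA, hmax⟩ := Set.Finite.exists_maximalFor id _ hfin ⟨⊥, hbot⟩
  refine ⟨A, hA, le_antisymm ?_ ?_⟩
  · intro x hx
    obtain ⟨B, hB, hAB, hxB⟩ := aux_exists_comm_sup A hA hx
    have := hmax hB hAB
    simp only [id] at this
    exact this hxB
  · have hA' : IsMulCommutative A := hA
    haveI := hA'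
    exact le_centralizer A

/-- In a finite group with all Sylow subgroups normal, every prime dividing the order of the
group divides the order of the center. -/
lemma aux_dvd_card_center {G : Type*} [Group G] [Finite G]
    (hsyl : ∀ (p : ℕ) (_ : Fact p.Prime) (P : Sylow p G), (↑P : Subgroup G).Normal)
    {p : ℕ} (hp : p.Prime) (hdvd : p ∣ Nat.card G) : p ∣ Nat.card (center G) := by
  haveI := Fact.mk hp
  haveI : Nontrivial G := by
    rcases subsingleton_or_nontrivial G with h | h
    · exfalso
      have : Nat.card G = 1 := Nat.card_eq_one_iff_unique.mpr ⟨⟨fun a b => Subsingleton.elim a b⟩, ⟨1⟩⟩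
      rw [this] at hdvd
      exact hp.one_lt.ne' (Nat.dvd_one.mp hdvd)
    · exact h
  have hG0 : Nat.card G ≠ 0 := Nat.card_pos.ne'
  obtain ⟨P⟩ : Nonempty (Sylow p G) := inferInstance
  have hcardP : Nat.card (↥(P : Subgroup G)) = p ^ (Nat.card G).factorization p :=
    P.card_eq_multiplicity
  have hfac : 1 ≤ (Nat.card G).factorization p :=
    (Nat.Prime.pow_dvd_iff_le_factorization hp hG0).mp (by simpa using hdvd)
  haveI : Nontrivial (↥(P : Subgroup G)) := by
    rw [← Finite.one_lt_card_iff_nontrivial, hcardP]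
    exact Nat.one_lt_pow (by omega) hp.one_lt
  haveI := P.isPGroup'.center_nontrivial
  obtain ⟨ζ, hζ⟩ := exists_ne (1 : center (↥(P : Subgroup G)))
  set z : G := ((ζ : ↥(P : Subgroup G)) : G) with hzdef
  have hzP : z ∈ (P : Subgroup G) := (ζ : ↥(P : Subgroup G)).2
  have hzne : z ≠ 1 := by
    intro h
    exact hζ (Subtype.ext (Subtype.ext h))
  -- z commutes with everything in P
  have hzcommP : ∀ g ∈ (P : Subgroup G), g * z = z * g := by
    intro g hg
    have := ζ.2
    rw [Subgroup.mem_center_iff] at this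
    exact congrArg Subtype.val (this ⟨g, hg⟩)
  -- the centralizer of z is everything
  have hzc : z ∈ center G := by
    set D := centralizer ({z} : Set G) with hD
    have hDtop : D = ⊤ := by
      have hDdvd : Nat.card (↥D) ∣ Nat.card G := Subgroup.card_dvd_of_le le_top |>.trans
        (by rw [Subgroup.card_top])
      have hD0 : Nat.card (↥D) ≠ 0 := Nat.card_pos.ne'
      have hGdvdD : Nat.card G ∣ Nat.card (↥D) := by
        rw [← Nat.factorization_le_iff_dvd hG0 hD0]
        intro r
        by_cases hr : r.Prime ∧ r ∣ Nat.card G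
        · obtain ⟨hrp, hrdvd⟩ := hr
          haveI := Fact.mk hrp
          obtain ⟨Q⟩ : Nonempty (Sylow r G) := inferInstance
          have hQD : (Q : Subgroup G) ≤ D := by
            by_cases hrq : r = p
            · subst hrq
              haveI : Finite (Sylow r G) := inferInstance
              haveI := Sylow.unique_of_normal P (hsyl r ⟨hrp⟩ P)
              have : Q = P := Subsingleton.elim _ _
              subst this
              intro g hg
              rw [mem_centralizer_iff]
              rintro h rfl
              exact (hzcommP g hg).symm
            · have hdisj : Disjoint (Q : Subgroup G) (P : Subgroup G) :=
                IsPGroup.disjoint_of_ne r p hrq _ _ Q.isPGroup' P.isPGroup'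
              intro g hg
              rw [mem_centralizer_iff]
              rintro h rfl
              exact (Subgroup.commute_of_normal_of_disjoint _ _ (hsyl p ⟨hp⟩ P)
                (hsyl r ⟨hrp⟩ Q) (hdisj.symm) z g hzP hg)
          have : (r : ℕ) ^ (Nat.card G).factorization r ∣ Nat.card (↥D) := by
            rw [← Q.card_eq_multiplicity]
            exact Subgroup.card_dvd_of_le hQD
          rwa [← Nat.Prime.pow_dvd_iff_le_factorization hrp hD0]
        · rcases not_and_or.mp hr with h | h
          · simp [Nat.factorization_eq_zero_of_not_prime _ h]
          · simp [Nat.factorization_eq_zero_of_not_dvd h]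
      have : Nat.card (↥D) = Nat.card G := Nat.dvd_antisymm hDdvd hGdvdD
      exact Subgroup.eq_top_of_card_eq _ this
    rw [Subgroup.mem_center_iff]
    intro g
    have hg : g ∈ D := by rw [hDtop]; exact mem_top g
    exact mem_centralizer_singleton_iff.mp hg
  -- p divides the order of z
  have hpz : p ∣ orderOf z := by
    obtain ⟨k, hk⟩ := P.isPGroup' (ζ : ↥(P : Subgroup G))
    have hzk : z ^ p ^ k = 1 := by
      have := congrArg (Subtype.val) hk
      simpa [hzdef] using this
    obtain ⟨m, hm, hom⟩ := (Nat.dvd_prime_pow hp).mp (orderOf_dvd_of_pow_eq_one hzk)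
    have hm0 : m ≠ 0 := by
      rintro rfl
      rw [pow_zero] at hom
      exact hzne (orderOf_eq_one_iff.mp hom)
    rw [hom]
    exact dvd_pow_self p hm0
  calc p ∣ orderOf z := hpz
    _ = orderOf (⟨z, hzc⟩ : center G) := (Subgroup.orderOf_mk z hzc).symm
    _ ∣ Nat.card (center G) := orderOf_dvd_natCard _

end Aux

/-- A finite non-abelian group is a nilpotent PNC-group iff it is a `p`-group for some
prime `p`. -/
theorem nilpotent_isPNCGroup_iff_isPGroup (G : Type*) [Group G] [Finite G]
    (hG : ¬ ∀ a b : G, a * b = b * a) :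
    (Group.IsNilpotent G ∧ IsPNCGroup G) ↔ ∃ p : ℕ, p.Prime ∧ IsPGroup p G := by
  constructor
  · rintro ⟨hnil, hpnc⟩
    by_contra hnp
    push_neg at hnp
    apply hG
    rcases subsingleton_or_nontrivial G with h | h
    · intro a b; exact Subsingleton.elim _ _
    have hG0 : Nat.card G ≠ 0 := Nat.card_pos.ne'
    have hG1 : Nat.card G ≠ 1 := by
      intro h1
      exact (Finite.one_lt_card_iff_nontrivial.mpr h).ne' h1
    -- two distinct primes dividing the order of G
    set p := (Nat.card G).minFac with hpdef
    have hp : p.Prime := Nat.minFac_prime hG1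
    have hpdvd : p ∣ Nat.card G := Nat.minFac_dvd _
    obtain ⟨q, hq, hqdvd, hqp⟩ : ∃ q : ℕ, q.Prime ∧ q ∣ Nat.card G ∧ q ≠ p := by
      by_contra hc
      push_neg at hc
      haveI := Fact.mk hp
      refine hnp p hp (IsPGroup.of_card (n := (Nat.card G).primeFactorsList.length) ?_)
      exact Nat.eq_prime_pow_of_unique_prime_dvd hG0 (fun {d} hd hdvd => hc d hd hdvd)
    -- all Sylow subgroups are normal
    have hsyl : ∀ (r : ℕ) (_ : Fact r.Prime) (P : Sylow r G), (↑P : Subgroup G).Normal :=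
      ((isNilpotent_of_finite_tfae (G := G)).out 0 3).mp hnil
    have hpc : p ∣ Nat.card (center G) := aux_dvd_card_center hsyl hp hpdvd
    have hqc : q ∣ Nat.card (center G) := aux_dvd_card_center hsyl hq hqdvd
    -- maximal commutative subgroup
    obtain ⟨A, hAcomm, hAcent⟩ := aux_exists_maximal_comm (G := G)
    have hZA : center G ≤ A := hAcent ▸ center_le_centralizer (A : Set G)
    have hpA : p ∣ Nat.card (↥A) := hpc.trans (Subgroup.card_dvd_of_le hZA)
    have hqA : q ∣ Nat.card (↥A) := hqc.trans (Subgroup.card_dvd_of_le hZA)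
    -- A is not an r-group for any prime r
    have hnotp : ∀ r : ℕ, r.Prime → ¬ IsPGroup r (↥A) := by
      intro r hr hrA
      haveI := Fact.mk hr
      obtain ⟨n, hn⟩ := IsPGroup.iff_card.mp hrA
      rw [hn] at hpA hqA
      have h1 : p = r := (Nat.prime_dvd_prime_iff_eq hp hr).mp (hp.dvd_of_dvd_pow hpA)
      have h2 : q = r := (Nat.prime_dvd_prime_iff_eq hq hr).mp (hq.dvd_of_dvd_pow hqA)
      exact hqp (h2.trans h1.symm)
    have hnorm : normalizer (A : Set G) = A := by
      rw [hpnc A hAcomm hnotp, hAcent]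
    -- normalizer condition forces A = ⊤
    have hnc : NormalizerCondition G := @normalizerCondition_of_isNilpotent G _ hnil
    have hAtop : A = ⊤ :=
      (normalizerCondition_iff_only_full_group_self_normalizing.mp hnc) A hnorm
    intro a b
    exact congrArg Subtype.val
      (hAcomm.is_comm.comm ⟨a, hAtop ▸ mem_top a⟩ ⟨b, hAtop ▸ mem_top b⟩)
  · rintro ⟨p, hp, hpg⟩
    haveI := Fact.mk hp
    refine ⟨hpg.isNilpotent, fun H hc hnp => absurd (hpg.to_subgroup H) (hnp p hp)⟩
end

section
/- Let G be a finite solvable non-abelian group. If G is a PNC-group, then the Fitting subgroup F(G) is a p-group; that is, there exists a prime p such that every nilpotent normal subgroup of G is a p-group. -/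
open Subgroup Pointwise



/-- A nontrivial normal subgroup of a nilpotent group contains a nontrivial central element. -/
lemma aux_exists_mem_center_of_normal {G : Type*} [Group G] [Group.IsNilpotent G]
    {H : Subgroup G} (hn : H.Normal) (hb : H ≠ ⊥) :
    ∃ x : G, x ∈ H ∧ x ∈ Subgroup.center G ∧ x ≠ 1 := by
  obtain ⟨n, hucs⟩ := Group.IsNilpotent.nilpotent' (G := G)
  suffices h : ∀ m : ℕ, H ⊓ Subgroup.upperCentralSeries G m ≠ ⊥ →
      ∃ x : G, x ∈ H ∧ x ∈ Subgroup.center G ∧ x ≠ 1 by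
    exact h n (by rwa [hucs, inf_top_eq])
  intro m
  induction m with
  | zero => intro h; exact absurd (by rw [Subgroup.upperCentralSeries_zero, inf_bot_eq]) h
  | succ m ih =>
    intro h
    by_cases h0 : H ⊓ Subgroup.upperCentralSeries G m = ⊥
    · obtain ⟨⟨x, hx⟩, hx1⟩ := Subgroup.ne_bot_iff_exists_ne_one.mp h
      have hxne : x ≠ 1 := fun hteq => hx1 (Subtype.ext hteq)
      refine ⟨x, hx.1, Subgroup.mem_center_iff.mpr fun g => ?_, hxne⟩
      have hcomm : x * g * x⁻¹ * g⁻¹ ∈ H ⊓ Subgroup.upperCentralSeries G m := by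
        constructor
        · have h1 : x * (g * x⁻¹ * g⁻¹) ∈ H :=
            H.mul_mem hx.1 (hn.conj_mem x⁻¹ (H.inv_mem hx.1) g)
          simpa [mul_assoc] using h1
        · exact Subgroup.mem_upperCentralSeries_succ_iff.mp hx.2 g
      rw [h0, Subgroup.mem_bot] at hcomm
      simpa [mul_assoc] using (congrArg (fun z => z * g * x) hcomm).symm
    · exact ih h0

/-- From a nontrivial element of prime-power order, extract a power of prime order. -/
lemma aux_prime_order {G : Type*} [Group G] {x : G} {q n : ℕ} (hq : q.Prime)
    (hx1 : x ≠ 1) (hxn : x ^ q ^ n = 1) : ∃ k : ℕ, orderOf (x ^ k) = q := by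
  haveI : Fact q.Prime := ⟨hq⟩
  obtain ⟨m, -, hm⟩ := (Nat.dvd_prime_pow hq).mp (orderOf_dvd_of_pow_eq_one hxn)
  have hm0 : m ≠ 0 := by
    intro h
    rw [h, pow_zero, orderOf_eq_one_iff] at hm
    exact hx1 hm
  refine ⟨q ^ (m - 1), orderOf_eq_prime ?_ ?_⟩
  · have hsub : m - 1 + 1 = m := Nat.succ_pred_eq_of_pos (Nat.pos_of_ne_zero hm0)
    rw [← pow_mul, ← pow_succ, hsub, ← hm, pow_orderOf_eq_one]
  · intro hcon
    have hdvd : q ^ m ∣ q ^ (m - 1) := hm ▸ orderOf_dvd_of_pow_eq_one hcon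
    have := Nat.pow_dvd_pow_iff_le_right hq.one_lt |>.mp hdvd
    omega

/-- key1: a nilpotent normal subgroup `N` with `q ∣ |N|` contains an element of order `q`
centralizing `N`. -/
lemma aux_key1 {G : Type*} [Group G] [Finite G] {N : Subgroup G} (hN : N.Normal)
    (hnil : Group.IsNilpotent ↥N) {q : ℕ} (hq : q.Prime) (hdvd : q ∣ Nat.card ↥N) :
    ∃ x : G, x ∈ Subgroup.centralizer (N : Set G) ⊓ N ∧ orderOf x = q := by
  haveI : Fact q.Prime := ⟨hq⟩
  obtain ⟨S⟩ : Nonempty (Sylow q ↥N) := inferInstance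
  have hSnormal : (S : Subgroup ↥N).Normal := by
    have htfae := (isNilpotent_of_finite_tfae (G := ↥N)).out 0 3
    exact htfae.mp hnil q ⟨hq⟩ S
  have hcard : Nat.card ↥(S : Subgroup ↥N) = q ^ (Nat.card ↥N).factorization q :=
    S.card_eq_multiplicity
  have h0 : Nat.card ↥N ≠ 0 := Nat.card_pos.ne'
  have hkpos : 0 < (Nat.card ↥N).factorization q :=
    Nat.Prime.factorization_pos_of_dvd hq h0 hdvd
  have hSbot : (S : Subgroup ↥N) ≠ ⊥ := by
    intro h
    rw [h] at hcard
    have h1 : (1 : ℕ) = q ^ (Nat.card ↥N).factorization q := by simpa using hcard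
    have h2 : 1 < q ^ (Nat.card ↥N).factorization q := Nat.one_lt_pow hkpos.ne' hq.one_lt
    omega
  obtain ⟨x, hxS, hxZ, hx1⟩ := aux_exists_mem_center_of_normal hSnormal hSbot
  obtain ⟨n, hn⟩ := S.isPGroup' ⟨x, hxS⟩
  have hxpow : x ^ q ^ n = 1 := by
    simpa using congrArg Subtype.val hn
  obtain ⟨k, hk⟩ := aux_prime_order hq hx1 hxpow
  set y : ↥N := x ^ k with hy
  have hyZ : y ∈ Subgroup.center ↥N := Subgroup.pow_mem _ hxZ k
  refine ⟨(y : G), ⟨?_, y.2⟩, ?_⟩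
  · refine Subgroup.mem_centralizer_iff.mpr fun h hh => ?_
    have := congrArg Subtype.val ((Subgroup.mem_center_iff.mp hyZ) ⟨h, hh⟩)
    simpa using this
  · rw [← hk]
    simpa using orderOf_injective N.subtype N.subtype_injective y


lemma aux_other_prime {H : Type*} [Group H] [Finite H] {p : ℕ} (hp : p.Prime)
    (h : ¬ IsPGroup p H) : ∃ s : ℕ, s.Prime ∧ s ≠ p ∧ s ∣ Nat.card H := by
  haveI : Fact p.Prime := ⟨hp⟩
  by_contra hs
  push_neg at hs
  apply h
  rw [IsPGroup.iff_card]
  have h0 : Nat.card H ≠ 0 := Nat.card_pos.ne'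
  exact ⟨_, Nat.eq_prime_pow_of_unique_prime_dvd h0 fun {d} hd hdvd => by
    by_contra hne
    exact absurd hdvd (hs d hd hne)⟩

/-- The `q`-primary part of a commutative normal subgroup. -/
lemma aux_primary {G : Type*} [Group G] (A : Subgroup G) (hA : IsMulCommutative A)
    (hAn : A.Normal) (q : ℕ) :
    ∃ Q : Subgroup G, Q.Normal ∧ Q ≤ A ∧ IsPGroup q ↥Q ∧
      ∀ x ∈ A, (∃ n : ℕ, x ^ q ^ n = 1) → x ∈ Q := by
  haveI := hA
  refine ⟨{ carrier := {x | x ∈ A ∧ ∃ n : ℕ, x ^ q ^ n = 1}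
            one_mem' := ⟨A.one_mem, 0, by simp⟩
            mul_mem' := ?_
            inv_mem' := ?_ }, ?_, ?_, ?_, ?_⟩
  · rintro a b ⟨ha, n, hn⟩ ⟨hb, m, hm⟩
    refine ⟨A.mul_mem ha hb, n + m, ?_⟩
    have hc : Commute a b := (commute_iff_eq a b).mpr (mul_comm_of_mem_isMulCommutative (H := A) ha hb)
    rw [hc.mul_pow, pow_add, pow_mul, hn, one_pow, one_mul, mul_comm (q ^ n) (q ^ m), pow_mul, hm, one_pow]
  · rintro a ⟨ha, n, hn⟩
    exact ⟨A.inv_mem ha, n, by rw [inv_pow, hn, inv_one]⟩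
  · constructor
    rintro a ⟨ha, n, hn⟩ g
    refine ⟨hAn.conj_mem a ha g, n, ?_⟩
    rw [conj_pow, hn, mul_one, mul_inv_cancel]
  · exact fun x hx => hx.1
  · rintro ⟨x, hx, n, hn⟩
    exact ⟨n, Subtype.ext (by simpa using hn)⟩
  · exact fun x hx hn => ⟨hx, hn⟩

lemma aux_central_elements {G : Type*} [Group G] [Finite G] (hpnc : IsPNCGroup G)
    (hcon : ∀ p : ℕ, p.Prime → ∃ N : Subgroup G, N.Normal ∧ Group.IsNilpotent ↥N ∧ ¬ IsPGroup p ↥N) :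
    ∃ a b : G, a ∈ Subgroup.center G ∧ b ∈ Subgroup.center G ∧
      (orderOf a).Prime ∧ (orderOf b).Prime ∧ orderOf a ≠ orderOf b := by
  -- get an element of prime order q, centralizing a nilpotent normal subgroup
  have key : ∀ p : ℕ, p.Prime → ∃ (x : G) (A : Subgroup G) (q : ℕ),
      A.Normal ∧ IsMulCommutative A ∧ x ∈ A ∧ orderOf x = q ∧ q.Prime ∧ q ≠ p := by
    intro p hp
    obtain ⟨N, hNnorm, hNnil, hNp⟩ := hcon p hp
    obtain ⟨q, hq, hqp, hqdvd⟩ := aux_other_prime hp hNp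
    obtain ⟨x, hx, hxq⟩ := aux_key1 hNnorm hNnil hq hqdvd
    refine ⟨x, Subgroup.centralizer (N : Set G) ⊓ N, q, ?_, ?_, hx, hxq, hq, hqp⟩
    · constructor
      rintro a ⟨hac, haN⟩ g
      refine ⟨?_, hNnorm.conj_mem a haN g⟩
      refine Subgroup.mem_centralizer_iff.mpr fun h hh => ?_
      have h2 : g⁻¹ * h * g ∈ N := by
        have := hNnorm.conj_mem h hh g⁻¹
        simpa using this
      have := Subgroup.mem_centralizer_iff.mp hac _ h2
      -- this : (g⁻¹ * h * g) * a = a * (g⁻¹ * h * g)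
      have h3 := congrArg (fun z => g * z * g⁻¹) this
      simpa [mul_assoc] using h3
    · refine Subgroup.le_centralizer_iff_isMulCommutative.mp fun a ha => ?_
      exact Subgroup.mem_centralizer_iff.mpr fun h hh =>
        Subgroup.mem_centralizer_iff.mp ha.1 h (Subgroup.mem_inf.mp hh).2
  obtain ⟨x, A₁, q, hA₁n, hA₁c, hxA, hxq, hq, hq2⟩ := key 2 Nat.prime_two
  obtain ⟨y, A₂, r, hA₂n, hA₂c, hyA, hyr, hr, hrq⟩ := key q hq
  obtain ⟨Q₁, hQ₁n, hQ₁le, hQ₁p, hQ₁mem⟩ := aux_primary A₁ hA₁c hA₁n q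
  obtain ⟨Q₂, hQ₂n, hQ₂le, hQ₂p, hQ₂mem⟩ := aux_primary A₂ hA₂c hA₂n r
  have hxQ : x ∈ Q₁ := hQ₁mem x hxA ⟨1, by rw [pow_one, ← hxq, pow_orderOf_eq_one]⟩
  have hyQ : y ∈ Q₂ := hQ₂mem y hyA ⟨1, by rw [pow_one, ← hyr, pow_orderOf_eq_one]⟩
  have hdis : Disjoint Q₁ Q₂ := by
    rw [Subgroup.disjoint_def]
    intro z hz1 hz2
    obtain ⟨n, hn⟩ := hQ₁p ⟨z, hz1⟩
    obtain ⟨m, hm⟩ := hQ₂p ⟨z, hz2⟩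
    have hn' : z ^ q ^ n = 1 := by simpa using congrArg Subtype.val hn
    have hm' : z ^ r ^ m = 1 := by simpa using congrArg Subtype.val hm
    have hco : Nat.Coprime (q ^ n) (r ^ m) :=
      Nat.Coprime.pow n m ((Nat.coprime_primes hq hr).mpr (Ne.symm hrq))
    have h1 : orderOf z ∣ q ^ n := orderOf_dvd_of_pow_eq_one hn'
    have h2 : orderOf z ∣ r ^ m := orderOf_dvd_of_pow_eq_one hm'
    have : orderOf z = 1 := Nat.dvd_one.mp (hco ▸ Nat.dvd_gcd h1 h2)
    exact orderOf_eq_one_iff.mp this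
  have hcomm : ∀ a ∈ Q₁, ∀ b ∈ Q₂, Commute a b := fun a ha b hb =>
    Subgroup.commute_of_normal_of_disjoint _ _ hQ₁n hQ₂n hdis a b ha hb
  haveI := hQ₂n
  set B := Q₁ ⊔ Q₂ with hB
  have hBn : B.Normal := Subgroup.sup_normal Q₁ Q₂
  have hBc : IsMulCommutative B := by
    refine Subgroup.le_centralizer_iff_isMulCommutative.mp ?_
    have hmem : ∀ a ∈ B, a ∈ Subgroup.centralizer (B : Set G) := by
      intro a haB
      have haB' : a ∈ (Q₁ : Set G) * (Q₂ : Set G) := by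
        rw [← Subgroup.mul_normal Q₁ Q₂]; exact haB
      obtain ⟨a₁, ha₁, a₂, ha₂, rfl⟩ := haB'
      refine Subgroup.mem_centralizer_iff.mpr fun h hh => ?_
      have hh' : h ∈ (Q₁ : Set G) * (Q₂ : Set G) := by
        rw [← Subgroup.mul_normal Q₁ Q₂]; exact hh
      obtain ⟨h₁, hh₁, h₂, hh₂, rfl⟩ := hh'
      -- everything commutes with everything
      haveI := hA₁c
      haveI := hA₂c
      have c11 : Commute h₁ a₁ := (commute_iff_eq _ _).mpr
        (mul_comm_of_mem_isMulCommutative (H := A₁) (hQ₁le hh₁) (hQ₁le ha₁))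
      have c22 : Commute h₂ a₂ := (commute_iff_eq _ _).mpr
        (mul_comm_of_mem_isMulCommutative (H := A₂) (hQ₂le hh₂) (hQ₂le ha₂))
      have c12 : Commute a₁ h₂ := hcomm _ ha₁ _ hh₂
      have c21 : Commute h₁ a₂ := (hcomm _ hh₁ _ ha₂).symm.symm
      have c21' : Commute a₂ h₁ := (hcomm _ hh₁ _ ha₂).symm
      have c2h2 : Commute a₂ h₂ := c22.symm
      calc (h₁ * h₂) * (a₁ * a₂)
          = h₁ * (h₂ * a₁) * a₂ := by group
        _ = h₁ * (a₁ * h₂) * a₂ := by rw [(c12.symm).eq]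
        _ = (h₁ * a₁) * (h₂ * a₂) := by group
        _ = (a₁ * h₁) * (a₂ * h₂) := by rw [c11.eq, c2h2.eq]
        _ = a₁ * (h₁ * a₂) * h₂ := by group
        _ = a₁ * (a₂ * h₁) * h₂ := by rw [c21'.eq]
        _ = (a₁ * a₂) * (h₁ * h₂) := by group
    exact fun a ha => hmem a ha
  have hBnp : ∀ p : ℕ, p.Prime → ¬ IsPGroup p ↥B := by
    intro p hp hpg
    have hxB : x ∈ B := le_sup_left (α := Subgroup G) hxQ
    have hyB : y ∈ B := le_sup_right (α := Subgroup G) hyQ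
    obtain ⟨n, hn⟩ := hpg ⟨x, hxB⟩
    obtain ⟨m, hm⟩ := hpg ⟨y, hyB⟩
    have hn' : x ^ p ^ n = 1 := by simpa using congrArg Subtype.val hn
    have hm' : y ^ p ^ m = 1 := by simpa using congrArg Subtype.val hm
    have h1 : q = p := by
      have := orderOf_dvd_of_pow_eq_one hn'
      rw [hxq] at this
      exact (Nat.prime_dvd_prime_iff_eq hq hp).mp (hq.dvd_of_dvd_pow this)
    have h2 : r = p := by
      have := orderOf_dvd_of_pow_eq_one hm'
      rw [hyr] at this
      exact (Nat.prime_dvd_prime_iff_eq hr hp).mp (hr.dvd_of_dvd_pow this)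
    exact hrq (h2.trans h1.symm)
  have heq := hpnc B hBc hBnp
  have hcent : (B : Set G) ⊆ Subgroup.center G := by
    rw [← Subgroup.centralizer_eq_top_iff_subset, ← heq, Subgroup.normalizer_eq_top_iff]
    exact hBn
  refine ⟨x, y, hcent (le_sup_left (α := Subgroup G) hxQ),
    hcent (le_sup_right (α := Subgroup G) hyQ), ?_, ?_, ?_⟩
  · rw [hxq]; exact hq
  · rw [hyr]; exact hr
  · rw [hxq, hyr]; exact fun h => hrq h.symm
/-- Property (C): every nontrivial abelian subgroup has normalizer equal to centralizer. -/
lemma aux_propC {G : Type*} [Group G] [Finite G] (hpnc : IsPNCGroup G)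
    {a b : G} (ha : a ∈ Subgroup.center G) (hb : b ∈ Subgroup.center G)
    (hqa : (orderOf a).Prime) (hqb : (orderOf b).Prime) (hab : orderOf a ≠ orderOf b) :
    ∀ H : Subgroup G, H ≠ ⊥ → IsMulCommutative H →
      (Subgroup.normalizer (H : Set G)) ≤ Subgroup.centralizer (H : Set G) := by
  intro H hHb hHc g hg
  haveI := hHc
  -- a prime s dividing the order of H
  have hcard : 1 < Nat.card ↥H := (Subgroup.one_lt_card_iff_ne_bot _).mpr hHb
  set s := (Nat.card ↥H).minFac with hs
  have hsprime : s.Prime := Nat.minFac_prime (by omega)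
  have hsdvd : s ∣ Nat.card ↥H := Nat.minFac_dvd _
  -- an element of H of order s
  haveI : Fact s.Prime := ⟨hsprime⟩
  haveI := Fintype.ofFinite ↥H
  obtain ⟨u, hu⟩ := exists_prime_orderOf_dvd_card (G := ↥H) s
    (by simpa [Nat.card_eq_fintype_card] using hsdvd)
  have huord : orderOf (u : G) = s := by
    rw [← hu]; exact orderOf_injective H.subtype H.subtype_injective u
  -- choose a central element of prime order different from s
  obtain ⟨c, hcZ, hct, hcs⟩ : ∃ c : G, c ∈ Subgroup.center G ∧ (orderOf c).Prime ∧ orderOf c ≠ s := by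
    by_cases h : orderOf a = s
    · exact ⟨b, hb, hqb, by rw [← h]; exact fun hh => hab hh.symm⟩
    · exact ⟨a, ha, hqa, h⟩
  set Z := Subgroup.zpowers c with hZ
  have hZle : Z ≤ Subgroup.center G := (Subgroup.zpowers_le).mpr hcZ
  haveI hZn : Z.Normal := by
    constructor
    intro n hn g'
    have : n ∈ Subgroup.center G := hZle hn
    have hcomm := (Subgroup.mem_center_iff.mp this) g'
    rw [show g' * n * g'⁻¹ = (g' * n) * g'⁻¹ from rfl, hcomm, mul_assoc, mul_inv_cancel, mul_one]
    exact hn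
  set H' := H ⊔ Z with hH'
  have hH'c : IsMulCommutative H' := by
    refine Subgroup.le_centralizer_iff_isMulCommutative.mp fun w hw => ?_
    have hw' : w ∈ (H : Set G) * (Z : Set G) := by rw [← Subgroup.mul_normal H Z]; exact hw
    obtain ⟨w₁, hw₁, w₂, hw₂, rfl⟩ := hw'
    refine Subgroup.mem_centralizer_iff.mpr fun v hv => ?_
    have hv' : v ∈ (H : Set G) * (Z : Set G) := by rw [← Subgroup.mul_normal H Z]; exact hv
    obtain ⟨v₁, hv₁, v₂, hv₂, rfl⟩ := hv'
    have c11 : Commute v₁ w₁ := (commute_iff_eq _ _).mpr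
      (Subgroup.mul_comm_of_mem_isMulCommutative (H := H) hv₁ hw₁)
    have hv₂Z : v₂ ∈ Subgroup.center G := hZle hv₂
    have hw₂Z : w₂ ∈ Subgroup.center G := hZle hw₂
    have cv2 : ∀ t : G, Commute t v₂ := fun t =>
      (commute_iff_eq _ _).mpr ((Subgroup.mem_center_iff.mp hv₂Z) t)
    have cw2 : ∀ t : G, Commute t w₂ := fun t =>
      (commute_iff_eq _ _).mpr ((Subgroup.mem_center_iff.mp hw₂Z) t)
    calc (v₁ * v₂) * (w₁ * w₂)
        = v₁ * (v₂ * w₁) * w₂ := by group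
      _ = v₁ * (w₁ * v₂) * w₂ := by rw [← (cv2 w₁).eq]
      _ = (v₁ * w₁) * (v₂ * w₂) := by group
      _ = (w₁ * v₁) * (w₂ * v₂) := by rw [c11.eq, (cw2 v₂).eq]
      _ = w₁ * (v₁ * w₂) * v₂ := by group
      _ = w₁ * (w₂ * v₁) * v₂ := by rw [(cw2 v₁).eq]
      _ = (w₁ * w₂) * (v₁ * v₂) := by group
  have hH'np : ∀ p : ℕ, p.Prime → ¬ IsPGroup p ↥H' := by
    intro p hp hpg
    have huH' : (u : G) ∈ H' := le_sup_left (α := Subgroup G) u.2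
    have hcH' : c ∈ H' := le_sup_right (α := Subgroup G) (Subgroup.mem_zpowers c)
    obtain ⟨n, hn⟩ := hpg ⟨(u : G), huH'⟩
    obtain ⟨m, hm⟩ := hpg ⟨c, hcH'⟩
    have hn' : (u : G) ^ p ^ n = 1 := by simpa using congrArg Subtype.val hn
    have hm' : c ^ p ^ m = 1 := by simpa using congrArg Subtype.val hm
    have h1 : s = p := by
      have := orderOf_dvd_of_pow_eq_one hn'
      rw [huord] at this
      exact (Nat.prime_dvd_prime_iff_eq hsprime hp).mp (hsprime.dvd_of_dvd_pow this)
    have h2 : orderOf c = p := by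
      have := orderOf_dvd_of_pow_eq_one hm'
      exact (Nat.prime_dvd_prime_iff_eq hct hp).mp (hct.dvd_of_dvd_pow this)
    exact hcs (h2.trans h1.symm)
  have heq := hpnc H' hH'c hH'np
  -- g normalizes H'
  have hgH' : g ∈ (Subgroup.normalizer (H' : Set G)) := by
    rw [Subgroup.mem_normalizer_iff]
    intro h
    constructor
    · intro hh
      have hh' : h ∈ (H : Set G) * (Z : Set G) := by rw [← Subgroup.mul_normal H Z]; exact hh
      obtain ⟨h₁, hh₁, h₂, hh₂, rfl⟩ := hh'
      have e : g * (h₁ * h₂) * g⁻¹ = (g * h₁ * g⁻¹) * (g * h₂ * g⁻¹) := by group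
      rw [e]
      have m1 : g * h₁ * g⁻¹ ∈ H := (Subgroup.mem_normalizer_iff.mp hg h₁).mp hh₁
      have m2 : g * h₂ * g⁻¹ ∈ Z := hZn.conj_mem h₂ hh₂ g
      exact Subgroup.mul_mem _ (le_sup_left (α := Subgroup G) m1)
        (le_sup_right (α := Subgroup G) m2)
    · intro hh
      have hh' : g * h * g⁻¹ ∈ (H : Set G) * (Z : Set G) := by
        rw [← Subgroup.mul_normal H Z]; exact hh
      obtain ⟨h₁, hh₁, h₂, hh₂, he⟩ := hh'
      have e : h = (g⁻¹ * h₁ * g) * (g⁻¹ * h₂ * g) := by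
        have := congrArg (fun z => g⁻¹ * z * g) he
        simpa [mul_assoc] using this.symm
      rw [e]
      have hginv : g⁻¹ ∈ (Subgroup.normalizer (H : Set G)) := Subgroup.inv_mem _ hg
      have m1 : g⁻¹ * h₁ * g ∈ H := by
        have := (Subgroup.mem_normalizer_iff.mp hginv h₁).mp hh₁
        simpa using this
      have m2 : g⁻¹ * h₂ * g ∈ Z := by
        have := hZn.conj_mem h₂ hh₂ g⁻¹
        simpa using this
      exact Subgroup.mul_mem _ (le_sup_left (α := Subgroup G) m1)
        (le_sup_right (α := Subgroup G) m2)
  rw [heq] at hgH'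
  exact Subgroup.centralizer_le (by exact_mod_cast le_sup_left (α := Subgroup G) (a := H) (b := Z)) hgH'
/-- If a finite solvable non-abelian group is a PNC-group, then its Fitting subgroup is a
`p`-group: there is a prime `p` such that every nilpotent normal subgroup of `G` is a
`p`-group. -/
theorem fitting_isPGroup_of_isPNCGroup (G : Type*) [Group G] [Finite G] [Group.IsSolvable G]
    (hG : ¬ ∀ a b : G, a * b = b * a) (hpnc : IsPNCGroup G) :
    ∃ p : ℕ, p.Prime ∧
      ∀ N : Subgroup G, N.Normal → Group.IsNilpotent N → IsPGroup p N := by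
  by_contra hcon
  push_neg at hcon
  obtain ⟨a, b, ha, hb, hqa, hqb, hab⟩ := aux_central_elements hpnc hcon
  have hC := aux_propC hpnc ha hb hqa hqb hab
  -- a minimal nonabelian subgroup K
  have htopS : ¬ IsMulCommutative (⊤ : Subgroup G) := by
    intro h
    haveI := h
    exact hG fun x y =>
      Subgroup.mul_comm_of_mem_isMulCommutative (H := ⊤) (Subgroup.mem_top x) (Subgroup.mem_top y)
  obtain ⟨K, hK, hKmin⟩ := (wellFounded_lt (α := Subgroup G)).has_min
    {L : Subgroup G | ¬ IsMulCommutative L} ⟨⊤, htopS⟩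
  have hproper : ∀ L : Subgroup G, L < K → IsMulCommutative L := by
    intro L hL
    by_contra h
    exact hKmin L h hL
  haveI : Nontrivial ↥K := by
    by_contra h
    rw [not_nontrivial_iff_subsingleton] at h
    exact hK ⟨⟨fun x y => Subsingleton.elim _ _⟩⟩
  set D := _root_.commutator ↥K with hD
  have hDbot : D ≠ ⊥ := by
    intro h
    apply hK
    have hle : (⊤ : Subgroup ↥K) ≤ Subgroup.centralizer ((⊤ : Subgroup ↥K) : Set ↥K) := by
      rw [← Subgroup.commutator_eq_bot_iff_le_centralizer]
      exact h
    exact ⟨⟨fun x y =>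
      Subgroup.mem_centralizer_iff.mp (hle (Subgroup.mem_top y)) x (Subgroup.mem_top x)⟩⟩
  have hDtop : D ≠ ⊤ := by
    intro h
    obtain ⟨n, hn⟩ := (isSolvable_def ↥K).mp inferInstance
    have hder : ∀ m, derivedSeries ↥K m = ⊤ := by
      intro m
      induction m with
      | zero => exact derivedSeries_zero ↥K
      | succ m ih => rw [derivedSeries_succ, ih, ← commutator_def]; exact h
    have hbt : (⊤ : Subgroup ↥K) = ⊥ := (hder n).symm.trans hn
    obtain ⟨x, y, hxy⟩ := exists_pair_ne ↥K
    apply hxy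
    have hx : x = 1 := Subgroup.mem_bot.mp (hbt ▸ Subgroup.mem_top x)
    have hy : y = 1 := Subgroup.mem_bot.mp (hbt ▸ Subgroup.mem_top y)
    rw [hx, hy]
  obtain ⟨M, hMco, hDM⟩ := (eq_top_or_exists_le_coatom D).resolve_left hDtop
  have hMneTop : M ≠ ⊤ := hMco.1
  have hMbot : M ≠ ⊥ := fun h => hDbot (le_bot_iff.mp (h ▸ hDM))
  haveI hMnormal : M.Normal := by
    constructor
    intro m hm g
    have hcm : g * m * g⁻¹ * m⁻¹ ∈ D :=
      Subgroup.commutator_mem_commutator (Subgroup.mem_top g) (Subgroup.mem_top m)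
    have he : g * m * g⁻¹ = (g * m * g⁻¹ * m⁻¹) * m := by group
    rw [he]
    exact M.mul_mem (hDM hcm) hm
  set M' := M.map K.subtype with hM'
  have hM'leK : M' ≤ K := by
    rintro _ ⟨v, hv, rfl⟩
    exact v.2
  have hM'ltK : M' < K := by
    obtain ⟨u, hu⟩ : ∃ u : ↥K, u ∉ M := by
      by_contra h
      push_neg at h
      exact hMneTop (top_le_iff.mp fun v _ => h v)
    refine lt_of_le_of_ne hM'leK fun h => ?_
    have huM' : (u : G) ∈ M' := by rw [h]; exact u.2
    obtain ⟨v, hv, hvu⟩ := huM'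
    rw [show v = u from Subtype.ext hvu] at hv
    exact hu hv
  have hM'c : IsMulCommutative M' := hproper M' hM'ltK
  have hM'bot : M' ≠ ⊥ := by
    intro h
    apply hMbot
    rw [eq_bot_iff]
    intro v hv
    have h1 : (v : G) ∈ M' := ⟨v, hv, rfl⟩
    rw [h] at h1
    exact Subgroup.mem_bot.mpr (Subtype.ext (Subgroup.mem_bot.mp h1))
  -- M is contained in the center of K
  have hMcenter : M ≤ Subgroup.center ↥K := by
    intro v hv
    rw [Subgroup.mem_center_iff]
    intro w
    have hwN : (w : G) ∈ (Subgroup.normalizer (M' : Set G)) := by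
      rw [Subgroup.mem_normalizer_iff]
      intro h
      constructor
      · rintro ⟨t, ht, rfl⟩
        exact ⟨w * t * w⁻¹, hMnormal.conj_mem t ht w, by simp⟩
      · rintro ⟨t, ht, hte⟩
        refine ⟨w⁻¹ * t * w, ?_, ?_⟩
        · have := hMnormal.conj_mem t ht w⁻¹
          simpa using this
        · have := congrArg (fun z => (w : G)⁻¹ * z * (w : G)) hte
          rw [show (K.subtype) (w⁻¹ * t * w) = (w : G)⁻¹ * (K.subtype t) * (w : G) by simp]
          rw [this]
          group
    have hwC := hC M' hM'bot hM'c hwN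
    have hcomm := Subgroup.mem_centralizer_iff.mp hwC (v : G) ⟨v, hv, rfl⟩
    exact Subtype.ext (by simpa using hcomm.symm)
  have hZne : Subgroup.center ↥K ≠ ⊤ := by
    intro h
    apply hK
    exact ⟨⟨fun x y => Subgroup.mem_center_iff.mp (h ▸ Subgroup.mem_top y) x⟩⟩
  have hZM : Subgroup.center ↥K = M := by
    by_contra h
    have hlt : M < Subgroup.center ↥K := lt_of_le_of_ne hMcenter fun hh => h hh.symm
    exact hZne (hMco.2 _ hlt)
  obtain ⟨w, hw⟩ : ∃ w : ↥K, w ∉ Subgroup.center ↥K := by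
    by_contra h
    push_neg at h
    exact hZne (top_le_iff.mp fun v _ => h v)
  set φ : ↥K →* ↥K ⧸ Subgroup.center ↥K := QuotientGroup.mk' (Subgroup.center ↥K) with hφ
  set wbar := φ w with hwbar
  have hcomap : Subgroup.comap φ (Subgroup.zpowers wbar) = ⊤ := by
    have hle : M ≤ Subgroup.comap φ (Subgroup.zpowers wbar) := by
      intro v hv
      rw [Subgroup.mem_comap]
      have : φ v = 1 := by
        rw [← MonoidHom.mem_ker, hφ, QuotientGroup.ker_mk']
        exact hMcenter hv
      rw [this]
      exact Subgroup.one_mem _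
    have hwin : w ∈ Subgroup.comap φ (Subgroup.zpowers wbar) :=
      Subgroup.mem_comap.mpr (Subgroup.mem_zpowers wbar)
    have hlt : M < Subgroup.comap φ (Subgroup.zpowers wbar) :=
      lt_of_le_of_ne hle fun h => hw (hZM ▸ (h ▸ hwin))
    exact hMco.2 _ hlt
  have hcyclic : IsCyclic (↥K ⧸ Subgroup.center ↥K) := by
    refine ⟨⟨wbar, fun x => ?_⟩⟩
    obtain ⟨v, rfl⟩ := QuotientGroup.mk'_surjective (Subgroup.center ↥K) x
    have hv : v ∈ Subgroup.comap φ (Subgroup.zpowers wbar) := by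
      rw [hcomap]; exact Subgroup.mem_top v
    exact Subgroup.mem_comap.mp hv
  haveI := hcyclic
  have hcommK : ∀ x y : ↥K, x * y = y * x :=
    commutative_of_cyclic_center_quotient φ (by rw [hφ, QuotientGroup.ker_mk'])
  exact hK ⟨⟨hcommK⟩⟩
end

section
/- Let G be a finite solvable non-abelian group. If G is a PNC-group, then the center Z(G) is a p-group for some prime p. -/
open scoped Pointwise
open scoped commutatorElement


/-- If a finite solvable non-abelian group is a PNC-group, then its center is a `p`-group
for some prime `p`. -/
theorem center_isPGroup_of_isPNCGroup (G : Type*) [Group G] [Finite G] [Group.IsSolvable G]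
    (hG : ¬ ∀ a b : G, a * b = b * a) (hpnc : IsPNCGroup G) :
    ∃ p : ℕ, p.Prime ∧ IsPGroup p (Subgroup.center G) := by
  classical
  by_contra hcon
  push_neg at hcon
  set Z := Subgroup.center G with hZdef
  have hZtop : Z ≠ ⊤ := by
    intro h
    apply hG
    intro a b
    have ha : a ∈ Z := h ▸ Subgroup.mem_top a
    exact (Subgroup.mem_center_iff.mp ha b).symm
  set Q := G ⧸ Z with hQdef
  set L : G →* Q := QuotientGroup.mk' Z with hLdef
  have hLsurj : Function.Surjective L := QuotientGroup.mk'_surjective Z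
  -- the derived series of Q reaches ⊥
  have hex : ∃ n, derivedSeries Q n = ⊥ := Group.IsSolvable.solvable
  have h0 : derivedSeries Q 0 ≠ ⊥ := by
    rw [derivedSeries_zero]
    intro h
    obtain ⟨g, hg⟩ : ∃ g : G, g ∉ Z := by
      by_contra hc
      push_neg at hc
      exact hZtop (Subgroup.eq_top_iff' Z |>.mpr hc)
    have h1 : L g ∈ (⊤ : Subgroup Q) := Subgroup.mem_top _
    rw [h] at h1
    have : g ∈ Z := by
      rw [← QuotientGroup.ker_mk' Z]
      exact Subgroup.mem_bot.mp h1
    exact hg this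
  -- least index
  have hm0 : Nat.find hex ≠ 0 := fun h => h0 (h ▸ Nat.find_spec hex)
  obtain ⟨k, hk⟩ := Nat.exists_eq_succ_of_ne_zero hm0
  set A : Subgroup Q := derivedSeries Q k with hAdef
  have hAbot : A ≠ ⊥ := Nat.find_min hex (hk ▸ Nat.lt_succ_self k)
  have hAA : ⁅A, A⁆ = ⊥ := by
    have := Nat.find_spec hex
    rw [hk, derivedSeries_succ] at this
    exact this
  have hAnormal : A.Normal := derivedSeries_normal Q k
  set N : Subgroup G := A.comap L with hNdef
  have hZN : Z ≤ N := by
    intro z hz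
    have : L z = 1 := by
      rw [← MonoidHom.mem_ker, QuotientGroup.ker_mk' Z]; exact hz
    show L z ∈ A
    rw [this]; exact A.one_mem
  -- images of elements of N commute in Q
  have hQcomm : ∀ x ∈ N, ∀ y ∈ N, Commute (L x) (L y) := by
    intro x hx y hy
    rw [← commutatorElement_eq_one_iff_commute]
    have : ⁅L x, L y⁆ ∈ ⁅A, A⁆ := Subgroup.commutator_mem_commutator hx hy
    rw [hAA] at this
    exact Subgroup.mem_bot.mp this
  -- key step: N is abelian
  have key : ∀ x ∈ N, ∀ y ∈ N, x * y = y * x := by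
    intro x hx
    set H : Subgroup G := Z ⊔ Subgroup.zpowers x with hHdef
    have hZH : Z ≤ H := le_sup_left
    have hxH : x ∈ H := Subgroup.mem_sup_right (Subgroup.mem_zpowers x)
    have hmem : ∀ a ∈ H, ∃ z ∈ Z, ∃ m : ℤ, a = z * x ^ m := by
      intro a ha
      have hset : ((Z ⊔ Subgroup.zpowers x : Subgroup G) : Set G)
          = (Z : Set G) * (Subgroup.zpowers x : Set G) := Subgroup.normal_mul _ _
      have ha' : a ∈ (Z : Set G) * (Subgroup.zpowers x : Set G) := by
        rw [← hset]; exact ha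
      obtain ⟨z, hz, w, hw, hzw⟩ := Set.mem_mul.mp ha'
      obtain ⟨m, hmw⟩ := Subgroup.mem_zpowers_iff.mp hw
      exact ⟨z, hz, m, by rw [← hzw, hmw]⟩
    have hcommH : IsMulCommutative H := by
      constructor
      constructor
      intro a b
      obtain ⟨z1, hz1, m1, he1⟩ := hmem a a.2
      obtain ⟨z2, hz2, m2, he2⟩ := hmem b b.2
      apply Subtype.ext
      show (a : G) * b = (b : G) * a
      rw [he1, he2]
      have c1 : Commute z1 (z2 * x ^ m2) := (Subgroup.mem_center_iff.mp hz1 _).symm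
      have c2 : Commute (x ^ m1) z2 := Subgroup.mem_center_iff.mp hz2 _
      have c3 : Commute (x ^ m1) (x ^ m2) := (Commute.refl x).zpow_zpow m1 m2
      calc z1 * x ^ m1 * (z2 * x ^ m2) = z1 * (x ^ m1 * (z2 * x ^ m2)) := by group
        _ = z1 * (z2 * x ^ m2 * x ^ m1) := by rw [(c2.mul_right c3).eq]
        _ = z2 * x ^ m2 * (z1 * x ^ m1) := by rw [← mul_assoc, c1.eq]; group
    have hnpH : ∀ p : ℕ, p.Prime → ¬ IsPGroup p H := by
      intro p hp hPG
      exact hcon p hp (hPG.to_le hZH)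
    have hconj : ∀ y ∈ N, ∀ h ∈ H, y * h * y⁻¹ ∈ H := by
      intro y hy h hh
      obtain ⟨z, hz, m, rfl⟩ := hmem h hh
      -- commutator of y and x is central
      set c : G := x⁻¹ * (y * x * y⁻¹) with hcdef
      have hcZ : c ∈ Z := by
        rw [← QuotientGroup.ker_mk' Z]
        show L c = 1
        have hcm := hQcomm x hx y hy
        have heq : L c = (L x)⁻¹ * (L y * L x * (L y)⁻¹) := by
          simp only [hcdef, map_mul, map_inv]
        rw [heq, ← hcm.eq]
        group
      have hxc : y * x * y⁻¹ = x * c := by rw [hcdef]; group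
      have hz' : y * z = z * y := Subgroup.mem_center_iff.mp hz y
      have hconjz : y * z * y⁻¹ = z := by rw [hz']; group
      have hzp : y * x ^ m * y⁻¹ = (y * x * y⁻¹) ^ m := by
        have := map_zpow (MulAut.conj y) x m
        simp only [MulAut.conj_apply] at this
        exact this
      have : y * (z * x ^ m) * y⁻¹ = (y * z * y⁻¹) * (y * x ^ m * y⁻¹) := by group
      rw [this, hconjz, hzp, hxc]
      exact H.mul_mem (hZH hz) (H.zpow_mem (H.mul_mem hxH (hZH hcZ)) m)
    have hnorm := hpnc H hcommH hnpH
    intro y hy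
    have hyn : y ∈ Subgroup.normalizer (H : Set G) := by
      rw [Subgroup.mem_normalizer_iff]
      intro h
      constructor
      · exact fun hh => hconj y hy h hh
      · intro hh
        have := hconj y⁻¹ (N.inv_mem hy) _ hh
        simpa [mul_assoc] using this
    rw [hnorm] at hyn
    exact Subgroup.mem_centralizer_iff.mp hyn x hxH
  -- apply PNC to N itself
  have hNcomm : IsMulCommutative N :=
    ⟨⟨fun a b => Subtype.ext (key a a.2 b b.2)⟩⟩
  have hNnp : ∀ p : ℕ, p.Prime → ¬ IsPGroup p N :=
    fun p hp h => hcon p hp (h.to_le hZN)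
  have hNnormal : N.Normal := hAnormal.comap L
  have hcent := hpnc N hNcomm hNnp
  rw [Subgroup.normalizer_eq_top_iff.mpr hNnormal] at hcent
  have hNZ : N ≤ Z := by
    intro g hg
    rw [hZdef]
    rw [Subgroup.mem_center_iff]
    intro b
    have hb : b ∈ Subgroup.centralizer (N : Set G) := by
      rw [← hcent]; exact Subgroup.mem_top b
    exact (Subgroup.mem_centralizer_iff.mp hb g hg).symm
  -- contradiction: A = ⊥
  apply hAbot
  rw [eq_bot_iff]
  intro a ha
  obtain ⟨g, rfl⟩ := hLsurj a
  have hgN : g ∈ N := ha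
  have hgZ : g ∈ Z := hNZ hgN
  have : L g = 1 := by
    rw [← MonoidHom.mem_ker, QuotientGroup.ker_mk' Z]; exact hgZ
  rw [this]
  exact Subgroup.mem_bot.mpr rfl
end

section
/- Let G be a finite non-abelian supersolvable group. If G is a PNC-group, then the Fitting subgroup F(G) is a Sylow p-subgroup of G for some prime p; that is, there exist a prime p and a normal Sylow p-subgroup P of G such that every nilpotent normal subgroup of G is contained in P. -/
/-- A group is supersolvable if it has a normal series (all terms normal in the whole
group) with cyclic factors. -/
def IsSupersolvableGroup (G : Type*) [Group G] : Prop :=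
  ∃ (n : ℕ) (s : Fin (n + 1) → Subgroup G) (_ : s 0 = ⊥) (_ : s (Fin.last n) = ⊤)
    (_ : ∀ i : Fin n, s i.castSucc ≤ s i.succ) (hnorm : ∀ i, (s i).Normal),
    ∀ i : Fin n,
      letI := hnorm i.castSucc
      IsCyclic (↥(s i.succ) ⧸ (s i.castSucc).subgroupOf (s i.succ))

open Subgroup

/-- A generating set of pairwise commuting elements generates a commutative subgroup. -/
lemma isCommutative_closure_of_comm {G : Type*} [Group G] {S : Set G}
    (h : ∀ a ∈ S, ∀ b ∈ S, Commute a b) : IsMulCommutative (Subgroup.closure S) := by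
  constructor
  constructor
  intro ⟨a, ha⟩ ⟨b, hb⟩
  have : Commute a b := by
    refine Subgroup.closure_induction₂ (p := fun x y _ _ => Commute x y)
      (fun x y hx hy => h x hx y hy) (fun x _ => Commute.one_left x)
      (fun x _ => Commute.one_right x)
      (fun x y z _ _ _ h1 h2 => h1.mul_left h2)
      (fun y z x _ _ _ h1 h2 => h1.mul_right h2)
      (fun x y _ _ hc => hc.inv_left)
      (fun x y _ _ hc => hc.inv_right) ha hb
  exact Subtype.ext this

/-- If a prime power of an element is `1` and the element is nontrivial, the prime
divides its order. -/
lemma prime_dvd_orderOf_of_pow_prime_pow {G : Type*} [Group G] {a : G} {q m : ℕ}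
    (hq : q.Prime) (ha : a ≠ 1) (h : a ^ q ^ m = 1) : q ∣ orderOf a := by
  have hdvd : orderOf a ∣ q ^ m := orderOf_dvd_of_pow_eq_one h
  obtain ⟨j, hjm, hj⟩ := (Nat.dvd_prime_pow hq).mp hdvd
  rcases Nat.eq_zero_or_pos j with rfl | hj0
  · simp only [pow_zero] at hj
    exact absurd (orderOf_eq_one_iff.mp hj) ha
  · rw [hj]
    exact dvd_pow_self q hj0.ne'

/-- A subgroup containing elements whose orders are divisible by two distinct primes is
not a `p`-group for any prime. -/
lemma not_isPGroup_of_two_primes {G : Type*} [Group G] {H : Subgroup G} {q₁ q₂ : ℕ}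
    (hq₁ : q₁.Prime) (hq₂ : q₂.Prime) (hne : q₁ ≠ q₂) {a b : G}
    (ha : a ∈ H) (hb : b ∈ H) (hoa : q₁ ∣ orderOf a) (hob : q₂ ∣ orderOf b) :
    ∀ r : ℕ, r.Prime → ¬ IsPGroup r H := by
  intro r hr hP
  have key : ∀ c : G, c ∈ H → ∀ q : ℕ, q.Prime → q ∣ orderOf c → q = r := by
    intro c hc q hq hdvd
    obtain ⟨k, hk⟩ := hP ⟨c, hc⟩
    have hck : c ^ r ^ k = 1 := by
      have := congrArg (Subtype.val) hk
      simpa using this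
    have : orderOf c ∣ r ^ k := orderOf_dvd_of_pow_eq_one hck
    exact (Nat.prime_dvd_prime_iff_eq hq hr).mp (hq.dvd_of_dvd_pow (hdvd.trans this))
  exact hne ((key a ha q₁ hq₁ hoa).trans (key b hb q₂ hq₂ hob).symm)

/-- Quotients of supersolvable groups are supersolvable. -/
lemma IsSupersolvableGroup.quotient {G : Type*} [Group G] (hss : IsSupersolvableGroup G)
    (N : Subgroup G) [hN : N.Normal] : IsSupersolvableGroup (G ⧸ N) := by
  obtain ⟨n, s, h0, htop, hmono, hnorm, hcyc⟩ := hss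
  refine ⟨n, fun i => (s i).map (QuotientGroup.mk' N), by simp [h0], ?_, ?_, ?_, ?_⟩
  · show (s (Fin.last n)).map (QuotientGroup.mk' N) = ⊤
    rw [htop]
    exact Subgroup.map_top_of_surjective _ (QuotientGroup.mk'_surjective N)
  · exact fun i => Subgroup.map_mono (hmono i)
  · exact fun i => (hnorm i).map _ (QuotientGroup.mk'_surjective N)
  · intro i
    letI := hnorm i.castSucc
    haveI : ((s i.castSucc).subgroupOf (s i.succ)).Normal :=
      Subgroup.normal_subgroupOf
    haveI : (((s i.castSucc).map (QuotientGroup.mk' N)).subgroupOf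
        ((s i.succ).map (QuotientGroup.mk' N))).Normal := by
      haveI : ((s i.castSucc).map (QuotientGroup.mk' N)).Normal :=
        (hnorm i.castSucc).map _ (QuotientGroup.mk'_surjective N)
      exact Subgroup.normal_subgroupOf
    haveI := hcyc i
    set f := QuotientGroup.mk' N
    let f₁ : ↥(s i.succ) →* ↥((s i.succ).map f) := f.subgroupMap (s i.succ)
    let f₂ : ↥(s i.succ) →* (↥((s i.succ).map f) ⧸
        ((s i.castSucc).map f).subgroupOf ((s i.succ).map f)) :=
      (QuotientGroup.mk' _).comp f₁
    have hker : (s i.castSucc).subgroupOf (s i.succ) ≤ f₂.ker := by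
      intro x hx
      have hx' : (x : G) ∈ s i.castSucc := hx
      simp only [f₂, MonoidHom.mem_ker, MonoidHom.comp_apply, QuotientGroup.mk'_apply,
        QuotientGroup.eq_one_iff]
      show (f₁ x : G ⧸ N) ∈ ((s i.castSucc).map f)
      exact ⟨x, hx', rfl⟩
    let g := QuotientGroup.lift _ f₂ hker
    have hsurj : Function.Surjective g := by
      have h2 : Function.Surjective f₂ :=
        (QuotientGroup.mk'_surjective _).comp (f.subgroupMap_surjective (s i.succ))
      intro y
      obtain ⟨x, hx⟩ := h2 y
      exact ⟨QuotientGroup.mk x, hx⟩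
    exact isCyclic_of_surjective g hsurj

/-- A nontrivial finite supersolvable group has a normal subgroup of prime order. -/
lemma exists_normal_prime_order (G : Type*) [Group G] [Finite G]
    (hss : IsSupersolvableGroup G) [hnt : Nontrivial G] :
    ∃ (q : ℕ) (Z : Subgroup G), q.Prime ∧ Z.Normal ∧ Nat.card Z = q := by
  classical
  obtain ⟨n, s, h0, htop, hmono, hnorm, hcyc⟩ := hss
  -- find the first nontrivial step
  have hex : ∃ i : Fin n, s i.castSucc = ⊥ ∧ s i.succ ≠ ⊥ := by
    by_contra hcon
    push_neg at hcon
    have hall : ∀ i : Fin (n + 1), s i = ⊥ := by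
      intro i
      induction i using Fin.induction with
      | zero => exact h0
      | succ j ih => exact hcon j ih
    have h1 := hall (Fin.last n)
    rw [htop] at h1
    obtain ⟨x, y, hxy⟩ := hnt
    have hx : x ∈ (⊤ : Subgroup G) := trivial
    have hy : y ∈ (⊤ : Subgroup G) := trivial
    rw [h1, Subgroup.mem_bot] at hx hy
    exact hxy (hx.trans hy.symm)
  obtain ⟨i, hbot, hne⟩ := hex
  set C := s i.succ with hC
  haveI : Nontrivial C := (Subgroup.nontrivial_iff_ne_bot C).mpr hne
  -- C is cyclic
  letI := hnorm i.castSucc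
  haveI hcy : IsCyclic (↥C ⧸ (s i.castSucc).subgroupOf C) := hcyc i
  have htau : (s i.castSucc).subgroupOf C = ⊥ := by rw [hbot, Subgroup.bot_subgroupOf]
  haveI : ((⊥ : Subgroup G).subgroupOf C).Normal := by
    rw [Subgroup.bot_subgroupOf]; infer_instance
  haveI hCcyc : IsCyclic ↥C := by
    have e1 : (↥C ⧸ (s i.castSucc).subgroupOf C) ≃* (↥C ⧸ (⊥ : Subgroup ↥C)) :=
      QuotientGroup.quotientMulEquivOfEq (by rw [htau])
    have e2 : (↥C ⧸ (⊥ : Subgroup ↥C)) ≃* ↥C := QuotientGroup.quotientBot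
    exact isCyclic_of_surjective (e2.toMonoidHom.comp e1.toMonoidHom)
      (e2.surjective.comp e1.surjective)
  have hcard : 1 < Nat.card C := Finite.one_lt_card
  set q := (Nat.card C).minFac with hq
  have hqprime : q.Prime := Nat.minFac_prime hcard.ne'
  haveI : Fact q.Prime := ⟨hqprime⟩
  -- Cauchy: an element of order q in C
  haveI : Fintype ↥C := Fintype.ofFinite _
  obtain ⟨z, hz⟩ := exists_prime_orderOf_dvd_card (G := ↥C) q
    (by rw [← Nat.card_eq_fintype_card]; exact (Nat.card C).minFac_dvd)
  -- the subgroup of elements of C with x ^ q = 1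
  have hCcomm : ∀ x y : G, x ∈ C → y ∈ C → Commute x y := by
    intro x y hx hy
    letI : CommGroup ↥C := hCcyc.commGroup
    have h := congrArg (Subtype.val) (mul_comm (⟨x, hx⟩ : ↥C) ⟨y, hy⟩)
    exact (by simpa using h : x * y = y * x)
  let Z : Subgroup G :=
    { carrier := {x : G | x ∈ C ∧ x ^ q = 1}
      one_mem' := ⟨C.one_mem, one_pow q⟩
      mul_mem' := by
        rintro x y ⟨hxC, hxq⟩ ⟨hyC, hyq⟩
        exact ⟨C.mul_mem hxC hyC, by rw [(hCcomm x y hxC hyC).mul_pow, hxq, hyq, one_mul]⟩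
      inv_mem' := by
        rintro x ⟨hxC, hxq⟩
        exact ⟨C.inv_mem hxC, by rw [inv_pow, hxq, inv_one]⟩ }
  have hZle : Z ≤ C := fun x hx => hx.1
  have hZnormal : Z.Normal := by
    constructor
    rintro x ⟨hxC, hxq⟩ g
    refine ⟨(hnorm i.succ).conj_mem x hxC g, ?_⟩
    have : (g * x * g⁻¹) ^ q = g * x ^ q * g⁻¹ := conj_pow
    rw [this, hxq, mul_one, mul_inv_cancel]
  refine ⟨q, Z, hqprime, hZnormal, ?_⟩
  -- cardinality
  have hzZ : Subgroup.zpowers (z : G) ≤ Z := by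
    rintro w ⟨k, rfl⟩
    refine ⟨C.zpow_mem z.2 k, ?_⟩
    have hzq : (z : G) ^ q = 1 := by
      have : z ^ q = 1 := by rw [← hz]; exact pow_orderOf_eq_one z
      exact congrArg Subtype.val this
    rw [← zpow_natCast, ← zpow_mul, mul_comm, zpow_mul, zpow_natCast, hzq, one_zpow]
  have h1 : q ∣ Nat.card Z := by
    have := Subgroup.card_dvd_of_le hzZ
    rwa [Nat.card_zpowers, Subgroup.orderOf_coe, hz] at this
  have h2 : Nat.card Z ∣ q := by
    haveI : IsCyclic ↥Z := Subgroup.isCyclic_of_le hZle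
    obtain ⟨w, hw⟩ := IsCyclic.exists_generator (α := ↥Z)
    have hwq : (w : G) ^ q = 1 := w.2.2
    have hdvd : orderOf w ∣ q := by
      have : orderOf (w : G) ∣ q := orderOf_dvd_of_pow_eq_one hwq
      rwa [Subgroup.orderOf_coe] at this
    have htop : Subgroup.zpowers w = (⊤ : Subgroup ↥Z) := by
      ext x; simp [hw x]
    have : Nat.card (Subgroup.zpowers w) = Nat.card ↥Z := by
      rw [htop]; exact Subgroup.card_top
    rw [← this, Nat.card_zpowers]
    exact hdvd
  exact Nat.dvd_antisymm h2 h1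

universe u

/-- A finite supersolvable group has a normal Sylow subgroup for the largest prime
dividing its order. -/
lemma exists_normal_sylow_of_max_prime :
    ∀ (Nb : ℕ) (G : Type u) [Group G] [Finite G], Nat.card G ≤ Nb →
      IsSupersolvableGroup G → ∀ (p : ℕ), p.Prime →
      (∀ q : ℕ, q.Prime → q ∣ Nat.card G → q ≤ p) →
      ∃ P : Sylow p G, (P : Subgroup G).Normal := by
  intro Nb
  induction Nb with
  | zero =>
    intro G _ _ hle _ _ _ _
    exact absurd hle (by have := Nat.card_pos (α := G); omega)
  | succ Nb ih =>
    intro G _ _ hle hss p hp hmax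
    haveI : Fact p.Prime := ⟨hp⟩
    by_cases hpdvd : p ∣ Nat.card G
    case neg =>
      have P : Sylow p G := default
      refine ⟨P, ?_⟩
      have hcard : Nat.card (P : Subgroup G) = 1 := by
        rw [Sylow.card_eq_multiplicity, Nat.factorization_eq_zero_of_not_dvd hpdvd, pow_zero]
      rw [Subgroup.card_eq_one.mp hcard]
      infer_instance
    case pos =>
      haveI : Nontrivial G := by
        rw [← Finite.one_lt_card_iff_nontrivial]
        have h1 := Nat.le_of_dvd Nat.card_pos hpdvd
        have h2 := hp.two_le
        omega
      obtain ⟨q, Z, hq, hZn, hZcard⟩ := exists_normal_prime_order G hss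
      haveI := hZn
      have hqdvd : q ∣ Nat.card G := hZcard ▸ Subgroup.card_subgroup_dvd_card Z
      have hqle : q ≤ p := hmax q hq hqdvd
      have hcardeq : Nat.card G = Nat.card (G ⧸ Z) * q := by
        rw [Subgroup.card_eq_card_quotient_mul_card_subgroup Z, hZcard]
      have hq2 := hq.two_le
      have hQpos : 0 < Nat.card (G ⧸ Z) := Nat.card_pos
      have hQlt : Nat.card (G ⧸ Z) < Nat.card G := by nlinarith
      have hssQ : IsSupersolvableGroup (G ⧸ Z) := hss.quotient Z
      have hQdvd : Nat.card (G ⧸ Z) ∣ Nat.card G := ⟨q, hcardeq⟩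
      have hmaxQ : ∀ r : ℕ, r.Prime → r ∣ Nat.card (G ⧸ Z) → r ≤ p := fun r hr hdvd =>
        hmax r hr (hdvd.trans hQdvd)
      obtain ⟨Pbar, hPbar⟩ := ih (G ⧸ Z) (by omega) hssQ p hp hmaxQ
      set M := (Pbar : Subgroup (G ⧸ Z)).comap (QuotientGroup.mk' Z) with hM
      have hMnormal : M.Normal := hPbar.comap (QuotientGroup.mk' Z)
      haveI := hMnormal
      set e := (Nat.card (G ⧸ Z)).factorization p with he
      have hPbarcard : Nat.card (Pbar : Subgroup (G ⧸ Z)) = p ^ e :=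
        Sylow.card_eq_multiplicity Pbar
      have key : Nat.card M = Nat.card Z * Nat.card (Pbar : Subgroup (G ⧸ Z)) :=
        QuotientGroup.card_preimage_mk Z ((Pbar : Subgroup (G ⧸ Z)) : Set (G ⧸ Z))
      rw [hZcard, hPbarcard] at key
      by_cases hqp : q = p
      case pos =>
        subst hqp
        have factp : (Nat.card G).factorization q = e + 1 := by
          rw [hcardeq, Nat.factorization_mul hQpos.ne' hq.pos.ne']
          simp [hq.factorization, he]
        have hMcard : Nat.card M = q ^ (Nat.card G).factorization q := by
          rw [key, factp, pow_succ, mul_comm]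
        exact ⟨Sylow.ofCard M hMcard, hMnormal⟩
      case neg =>
        have hqlt : q < p := lt_of_le_of_ne hqle hqp
        have factp : (Nat.card G).factorization p = e := by
          rw [hcardeq, Nat.factorization_mul hQpos.ne' hq.pos.ne']
          simp [hq.factorization, Finsupp.single_apply, hqp, he]
        haveI : Finite ↥M := inferInstance
        have P₀ : Sylow p ↥M := default
        have hMcardfact : (Nat.card ↥M).factorization p = e := by
          rw [key, Nat.factorization_mul hq.pos.ne' (pow_pos hp.pos e).ne']
          simp [hq.factorization, Finsupp.single_apply, hqp,
            Nat.Prime.factorization_pow, hp.factorization]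
        have hP₀card : Nat.card (P₀ : Subgroup ↥M) = p ^ e := by
          rw [Sylow.card_eq_multiplicity, hMcardfact]
        have hindex : (P₀ : Subgroup ↥M).index = q := by
          have h1 := Subgroup.card_mul_index (P₀ : Subgroup ↥M)
          rw [hP₀card, key] at h1
          have hppos : 0 < p ^ e := pow_pos hp.pos e
          nlinarith [h1]
        have hdvdq : Nat.card (Sylow p ↥M) ∣ q := hindex ▸ Sylow.card_dvd_index P₀
        have hn1 : Nat.card (Sylow p ↥M) = 1 := by
          rcases (Nat.Prime.eq_one_or_self_of_dvd hq _ hdvdq) with h | h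
          · exact h
          · exfalso
            have hmod := card_sylow_modEq_one p ↥M
            rw [h] at hmod
            have : q % p = 1 % p := hmod
            rw [Nat.mod_eq_of_lt hqlt, Nat.mod_eq_of_lt hp.one_lt] at this
            omega
        haveI : Subsingleton (Sylow p ↥M) := (Nat.card_eq_one_iff_unique.mp hn1).1
        have hP₀normal : (P₀ : Subgroup ↥M).Normal := by
          rw [← Subgroup.normalizer_eq_top_iff]
          rw [eq_top_iff']
          intro m
          exact (Sylow.smul_eq_iff_mem_normalizer (P := P₀) (g := m)).mp (Subsingleton.elim _ _)
        haveI := hP₀normal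
        haveI hchar : (P₀ : Subgroup ↥M).Characteristic :=
          Sylow.characteristic_of_normal P₀ hP₀normal
        have hKnormal : (Subgroup.map M.subtype (P₀ : Subgroup ↥M)).Normal :=
          ConjAct.normal_of_characteristic_of_normal
        have hKcard : Nat.card (Subgroup.map M.subtype (P₀ : Subgroup ↥M)) =
            p ^ (Nat.card G).factorization p := by
          rw [factp, ← hP₀card]
          exact (Nat.card_congr
            (Subgroup.equivMapOfInjective _ M.subtype M.subtype_injective).toEquiv).symm
        exact ⟨Sylow.ofCard _ hKcard, hKnormal⟩

/-- In a PNC-group, a commutative normal subgroup of non-prime-power order is central. -/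
lemma le_center_of_pnc {G : Type*} [Group G] (hpnc : IsPNCGroup G) {A : Subgroup G}
    (hA : A.Normal) (hc : IsMulCommutative A) (hnp : ∀ r : ℕ, r.Prime → ¬ IsPGroup r ↥A) :
    A ≤ Subgroup.center G := by
  have h := hpnc A hc hnp
  have h2 : Subgroup.centralizer (A : Set G) = ⊤ := by
    rw [← h]
    exact Subgroup.normalizer_eq_top_iff.mpr hA
  exact Subgroup.centralizer_eq_top_iff_subset.mp h2

/-- The key contradiction: a finite nonabelian supersolvable PNC-group cannot have two
nontrivial normal subgroups of coprime prime-power orders. -/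
lemma pnc_no_two_primes {G : Type*} [Group G] [Finite G] (hss : IsSupersolvableGroup G)
    (hG : ¬ ∀ a b : G, a * b = b * a) (hpnc : IsPNCGroup G)
    {q₁ q₂ : ℕ} (hq₁ : q₁.Prime) (hq₂ : q₂.Prime) (hne : q₁ ≠ q₂)
    {Q₁ Q₂ : Subgroup G} (h₁ : Q₁.Normal) (h₂ : Q₂.Normal)
    (hp₁ : IsPGroup q₁ ↥Q₁) (hp₂ : IsPGroup q₂ ↥Q₂)
    (hn₁ : Q₁ ≠ ⊥) (hn₂ : Q₂ ≠ ⊥) : False := by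
  haveI : Fact q₁.Prime := ⟨hq₁⟩
  haveI : Fact q₂.Prime := ⟨hq₂⟩
  -- the two subgroups are disjoint
  have hdisj : Disjoint Q₁ Q₂ := by
    rw [Subgroup.disjoint_def]
    intro x hx1 hx2
    obtain ⟨k, hk⟩ := hp₁ ⟨x, hx1⟩
    obtain ⟨l, hl⟩ := hp₂ ⟨x, hx2⟩
    have hk' : x ^ q₁ ^ k = 1 := by simpa using congrArg Subtype.val hk
    have hl' : x ^ q₂ ^ l = 1 := by simpa using congrArg Subtype.val hl
    have hco : (q₁ ^ k).Coprime (q₂ ^ l) :=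
      Nat.Coprime.pow k l ((Nat.coprime_primes hq₁ hq₂).mpr hne)
    have hd : orderOf x ∣ Nat.gcd (q₁ ^ k) (q₂ ^ l) :=
      Nat.dvd_gcd (orderOf_dvd_of_pow_eq_one hk') (orderOf_dvd_of_pow_eq_one hl')
    rw [Nat.Coprime] at hco
    rw [hco, Nat.dvd_one] at hd
    exact orderOf_eq_one_iff.mp hd
  -- find a nontrivial central element of each
  have hcentral : ∀ (q : ℕ), Fact q.Prime → ∀ (Q : Subgroup G), Q.Normal →
      IsPGroup q ↥Q → Q ≠ ⊥ →
      ∃ a : G, a ∈ Q ∧ a ∈ Subgroup.centralizer (Q : Set G) ∧ a ≠ 1 ∧ q ∣ orderOf a := by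
    intro q hqf Q hQ hpQ hnQ
    haveI : Nontrivial ↥Q := (Subgroup.nontrivial_iff_ne_bot Q).mpr hnQ
    haveI := hpQ.center_nontrivial
    obtain ⟨c, hc1⟩ := exists_ne (1 : Subgroup.center ↥Q)
    refine ⟨((c : ↥Q) : G), (c : ↥Q).2, ?_, ?_, ?_⟩
    · rw [Subgroup.mem_centralizer_iff]
      intro h hh
      have := Subgroup.mem_center_iff.mp c.2 ⟨h, hh⟩
      exact congrArg Subtype.val this
    · intro hc
      apply hc1
      apply Subtype.ext
      apply Subtype.ext
      exact hc
    · obtain ⟨k, hk⟩ := hpQ (c : ↥Q)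
      have hk' : ((c : ↥Q) : G) ^ q ^ k = 1 := by simpa using congrArg Subtype.val hk
      refine prime_dvd_orderOf_of_pow_prime_pow hqf.out ?_ hk'
      intro hc
      apply hc1
      apply Subtype.ext
      apply Subtype.ext
      exact hc
  obtain ⟨a, haQ, haC, ha1, haord⟩ := hcentral q₁ ⟨hq₁⟩ Q₁ h₁ hp₁ hn₁
  obtain ⟨b, hbQ, hbC, hb1, hbord⟩ := hcentral q₂ ⟨hq₂⟩ Q₂ h₂ hp₂ hn₂
  -- the subgroups Z₁ Z₂ (central parts), and their join A
  have hZnormal : ∀ (Q : Subgroup G), Q.Normal →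
      (Subgroup.centralizer (Q : Set G) ⊓ Q).Normal := by
    intro Q hQ
    refine ⟨fun z hz g => ?_⟩
    rw [Subgroup.mem_inf] at hz ⊢
    obtain ⟨hzc, hzQ⟩ := hz
    refine ⟨?_, hQ.conj_mem z hzQ g⟩
    rw [Subgroup.mem_centralizer_iff]
    intro h hh
    have hh' : g⁻¹ * h * g ∈ Q := by simpa using hQ.conj_mem h hh g⁻¹
    have hz' := Subgroup.mem_centralizer_iff.mp hzc (g⁻¹ * h * g) hh'
    calc h * (g * z * g⁻¹) = g * ((g⁻¹ * h * g) * z) * g⁻¹ := by group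
    _ = g * (z * (g⁻¹ * h * g)) * g⁻¹ := by rw [hz']
    _ = (g * z * g⁻¹) * h := by group
  set Z₁ := Subgroup.centralizer (Q₁ : Set G) ⊓ Q₁ with hZ₁
  set Z₂ := Subgroup.centralizer (Q₂ : Set G) ⊓ Q₂ with hZ₂
  haveI hZ₁n : Z₁.Normal := hZnormal Q₁ h₁
  haveI hZ₂n : Z₂.Normal := hZnormal Q₂ h₂
  have haZ : a ∈ Z₁ := ⟨haC, haQ⟩
  have hbZ : b ∈ Z₂ := ⟨hbC, hbQ⟩
  set A := Z₁ ⊔ Z₂ with hA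
  have hAgen : A = Subgroup.closure ((Z₁ : Set G) ∪ (Z₂ : Set G)) := by
    rw [Subgroup.closure_union, Subgroup.closure_eq, Subgroup.closure_eq]
  have hAcomm : IsMulCommutative A := by
    rw [hAgen]
    apply isCommutative_closure_of_comm
    rintro u (hu | hu) v (hv | hv)
    · exact (Subgroup.mem_centralizer_iff.mp hu.1 v hv.2).symm
    · exact Subgroup.commute_of_normal_of_disjoint Q₁ Q₂ h₁ h₂ hdisj u v hu.2 hv.2
    · exact (Subgroup.commute_of_normal_of_disjoint Q₂ Q₁ h₂ h₁ hdisj.symm u v hu.2 hv.2)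
    · exact (Subgroup.mem_centralizer_iff.mp hu.1 v hv.2).symm
  haveI hAnormal : A.Normal := Subgroup.sup_normal Z₁ Z₂
  have hAnp : ∀ r : ℕ, r.Prime → ¬ IsPGroup r ↥A :=
    not_isPGroup_of_two_primes hq₁ hq₂ hne (le_sup_left (α := Subgroup G) haZ)
      (le_sup_right (α := Subgroup G) hbZ) haord hbord
  have hAcenter : A ≤ Subgroup.center G := le_center_of_pnc hpnc hAnormal hAcomm hAnp
  have haW : a ∈ Subgroup.center G := hAcenter (le_sup_left (α := Subgroup G) haZ)
  have hbW : b ∈ Subgroup.center G := hAcenter (le_sup_right (α := Subgroup G) hbZ)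
  set W := Subgroup.center G with hW
  have hWne : W ≠ ⊤ := by
    intro htop
    apply hG
    intro u v
    have : u ∈ W := htop ▸ Subgroup.mem_top u
    exact (Subgroup.mem_center_iff.mp this v).symm
  -- find the first step of the chain escaping the center
  obtain ⟨n, s, h0, htop, hmono, hnorm, hcyc⟩ := hss
  have hex : ∃ i : Fin n, s i.castSucc ≤ W ∧ ¬ s i.succ ≤ W := by
    by_contra hcon
    push_neg at hcon
    have hall : ∀ i : Fin (n + 1), s i ≤ W := by
      intro i
      induction i using Fin.induction with
      | zero => rw [h0]; exact bot_le
      | succ j ih => exact hcon j ih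
    have := hall (Fin.last n)
    rw [htop, top_le_iff] at this
    exact hWne this
  obtain ⟨i, hle, hnle⟩ := hex
  letI := hnorm i.castSucc
  haveI hcy : IsCyclic (↥(s i.succ) ⧸ (s i.castSucc).subgroupOf (s i.succ)) := hcyc i
  obtain ⟨xbar, hxgen⟩ := IsCyclic.exists_generator
    (α := ↥(s i.succ) ⧸ (s i.castSucc).subgroupOf (s i.succ))
  obtain ⟨x₁, hx₁⟩ := QuotientGroup.mk'_surjective ((s i.castSucc).subgroupOf (s i.succ)) xbar
  set x : G := (x₁ : G) with hx
  set M := W ⊔ Subgroup.zpowers x with hM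
  have hσM : s i.succ ≤ M := by
    intro y hy
    obtain ⟨k, hk⟩ := Subgroup.mem_zpowers_iff.mp
      (hxgen (QuotientGroup.mk' _ (⟨y, hy⟩ : ↥(s i.succ))))
    have hmk : (QuotientGroup.mk' _ (x₁ ^ k) :
        ↥(s i.succ) ⧸ (s i.castSucc).subgroupOf (s i.succ)) = QuotientGroup.mk' _ ⟨y, hy⟩ := by
      rw [map_zpow, hx₁, hk]
    rw [QuotientGroup.mk'_eq_mk'] at hmk
    obtain ⟨z, hz, hzy⟩ := hmk
    have hzW : ((z : ↥(s i.succ)) : G) ∈ W := hle (Subgroup.mem_subgroupOf.mp hz)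
    have hyeq : y = x ^ k * (z : G) := by
      have := congrArg Subtype.val hzy
      simpa [hx] using this.symm
    rw [hyeq]
    exact Subgroup.mul_mem _
      ((le_sup_right (α := Subgroup G)) (Subgroup.zpow_mem _ (Subgroup.mem_zpowers x) k))
      ((le_sup_left (α := Subgroup G)) hzW)
  have hxW : x ∉ W := by
    intro hxw
    apply hnle
    intro y hy
    exact (sup_le le_rfl (Subgroup.zpowers_le.mpr hxw)) (hσM hy)
  have hMgen : M = Subgroup.closure ((W : Set G) ∪ {x}) := by
    rw [Subgroup.closure_union, Subgroup.closure_eq, ← Subgroup.zpowers_eq_closure x]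
  have hMcomm : IsMulCommutative M := by
    rw [hMgen]
    apply isCommutative_closure_of_comm
    rintro u hu v hv
    rcases hu with hu | hu
    · exact ((Subgroup.mem_center_iff.mp hu v)).symm
    · rcases hv with hv | hv
      · exact Subgroup.mem_center_iff.mp hv u
      · rw [Set.mem_singleton_iff] at hu hv
        rw [hu, hv]
  have hMnormal : M.Normal := by
    constructor
    intro m hm g
    rw [hMgen] at hm ⊢
    induction hm using Subgroup.closure_induction with
    | mem u hu =>
      rcases hu with hu | hu
      · have h' : g * u = u * g := Subgroup.mem_center_iff.mp hu g
        have h2 : g * u * g⁻¹ = u := by rw [h']; group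
        rw [h2]
        exact Subgroup.subset_closure (Or.inl hu)
      · rw [Set.mem_singleton_iff] at hu
        subst hu
        have hxσ : g * x * g⁻¹ ∈ s i.succ := (hnorm i.succ).conj_mem x x₁.2 g
        rw [← hMgen]
        exact hσM hxσ
    | one => simpa using Subgroup.one_mem _
    | mul u v hu hv ihu ihv =>
      have : g * (u * v) * g⁻¹ = (g * u * g⁻¹) * (g * v * g⁻¹) := by group
      rw [this]
      exact Subgroup.mul_mem _ ihu ihv
    | inv u hu ihu =>
      have : g * u⁻¹ * g⁻¹ = (g * u * g⁻¹)⁻¹ := by group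
      rw [this]
      exact Subgroup.inv_mem _ ihu
  have hMnp : ∀ r : ℕ, r.Prime → ¬ IsPGroup r ↥M :=
    not_isPGroup_of_two_primes hq₁ hq₂ hne ((le_sup_left (α := Subgroup G)) haW)
      ((le_sup_left (α := Subgroup G)) hbW) haord hbord
  have hMcenter : M ≤ Subgroup.center G := le_center_of_pnc hpnc hMnormal hMcomm hMnp
  exact hxW (hMcenter ((le_sup_right (α := Subgroup G)) (Subgroup.mem_zpowers x)))

/-- If a finite non-abelian supersolvable group is a PNC-group, then its Fitting subgroup is
a Sylow `p`-subgroup: there exist a prime `p` and a normal Sylow `p`-subgroup `P` of `G`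
containing every nilpotent normal subgroup of `G`. -/
theorem fitting_isSylow_of_isPNCGroup (G : Type*) [Group G] [Finite G]
    (hss : IsSupersolvableGroup G) (hG : ¬ ∀ a b : G, a * b = b * a)
    (hpnc : IsPNCGroup G) :
    ∃ (p : ℕ), p.Prime ∧ ∃ P : Sylow p G, (P : Subgroup G).Normal ∧
      ∀ N : Subgroup G, N.Normal → Group.IsNilpotent N → N ≤ (P : Subgroup G) := by
  haveI : Nontrivial G := by
    by_contra h
    rw [not_nontrivial_iff_subsingleton] at h
    exact hG fun a b => Subsingleton.elim _ _
  have hcard1 : 1 < Nat.card G := Finite.one_lt_card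
  have hcard0 : Nat.card G ≠ 0 := Nat.card_pos.ne'
  -- the largest prime dividing the order of G
  have hne : (Nat.card G).primeFactors.Nonempty := Nat.nonempty_primeFactors.mpr hcard1
  set p := (Nat.card G).primeFactors.max' hne with hpdef
  have hpmem : p ∈ (Nat.card G).primeFactors := (Nat.card G).primeFactors.max'_mem hne
  have hp : p.Prime := Nat.prime_of_mem_primeFactors hpmem
  haveI : Fact p.Prime := ⟨hp⟩
  have hpdvd : p ∣ Nat.card G := Nat.dvd_of_mem_primeFactors hpmem
  have hmax : ∀ q : ℕ, q.Prime → q ∣ Nat.card G → q ≤ p := fun q hq hdvd =>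
    Finset.le_max' _ q (Nat.mem_primeFactors.mpr ⟨hq, hdvd, hcard0⟩)
  obtain ⟨P, hPnormal⟩ :=
    exists_normal_sylow_of_max_prime (Nat.card G) G le_rfl hss p hp hmax
  -- P is nontrivial
  have hPne : (P : Subgroup G) ≠ ⊥ := by
    intro hbot
    have h1 : Nat.card (P : Subgroup G) = 1 := Subgroup.card_eq_one.mpr hbot
    rw [Sylow.card_eq_multiplicity] at h1
    have hpos : 0 < (Nat.card G).factorization p :=
      Nat.Prime.factorization_pos_of_dvd hp hcard0 hpdvd
    have := Nat.one_lt_pow hpos.ne' hp.one_lt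
    omega
  refine ⟨p, hp, P, hPnormal, ?_⟩
  intro N hN hnil
  haveI := hN
  -- every prime dividing |N| is p
  have hprimes : ∀ q : ℕ, q.Prime → q ∣ Nat.card ↥N → q = p := by
    intro q hq hdvd
    by_contra hqp
    haveI : Fact q.Prime := ⟨hq⟩
    have Q₀ : Sylow q ↥N := default
    have hQ₀n : (Q₀ : Subgroup ↥N).Normal := by
      have htfae := (isNilpotent_of_finite_tfae (G := ↥N)).out 0 3
      exact htfae.mp hnil q ⟨hq⟩ Q₀
    haveI := hQ₀n
    haveI hchar : (Q₀ : Subgroup ↥N).Characteristic :=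
      Sylow.characteristic_of_normal Q₀ hQ₀n
    have hQn : (Subgroup.map N.subtype (Q₀ : Subgroup ↥N)).Normal :=
      ConjAct.normal_of_characteristic_of_normal
    have hQp : IsPGroup q ↥(Subgroup.map N.subtype (Q₀ : Subgroup ↥N)) :=
      Q₀.isPGroup'.map N.subtype
    have hQcard : Nat.card (Subgroup.map N.subtype (Q₀ : Subgroup ↥N)) =
        Nat.card (Q₀ : Subgroup ↥N) :=
      (Nat.card_congr
        (Subgroup.equivMapOfInjective _ N.subtype N.subtype_injective).toEquiv).symm
    have hQne : Subgroup.map N.subtype (Q₀ : Subgroup ↥N) ≠ ⊥ := by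
      intro hbot
      have h1 := Subgroup.card_eq_one.mpr hbot
      rw [hQcard, Sylow.card_eq_multiplicity] at h1
      have hpos : 0 < (Nat.card ↥N).factorization q :=
        Nat.Prime.factorization_pos_of_dvd hq Nat.card_pos.ne' hdvd
      have := Nat.one_lt_pow hpos.ne' hq.one_lt
      omega
    exact pnc_no_two_primes hss hG hpnc hp hq (fun h => hqp h.symm)
      hPnormal hQn P.isPGroup' hQp hPne hQne
  -- so N is a p-group
  have hNp : IsPGroup p ↥N := by
    apply IsPGroup.of_card
    exact Nat.eq_prime_pow_of_unique_prime_dvd Nat.card_pos.ne'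
      (fun {d} hd hdvd => hprimes d hd hdvd) |>.trans rfl
  -- a p-group normal subgroup is contained in the normal Sylow p-subgroup
  have hmapP : Subgroup.map (QuotientGroup.mk' (P : Subgroup G)) N = ⊥ := by
    have hmp : IsPGroup p ↥(Subgroup.map (QuotientGroup.mk' (P : Subgroup G)) N) :=
      hNp.map (QuotientGroup.mk' (P : Subgroup G))
    obtain ⟨k, hk⟩ := IsPGroup.iff_card.mp hmp
    have hdvd : Nat.card (Subgroup.map (QuotientGroup.mk' (P : Subgroup G)) N) ∣
        (P : Subgroup G).index := by
      rw [Subgroup.index_eq_card]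
      exact Subgroup.card_subgroup_dvd_card _
    rw [hk] at hdvd
    have hnd : ¬ p ∣ (P : Subgroup G).index := P.not_dvd_index
    have hk0 : k = 0 := by
      by_contra hk0
      exact hnd (dvd_trans (dvd_pow_self p hk0) hdvd)
    rw [hk0, pow_zero] at hk
    exact Subgroup.card_eq_one.mp hk
  have := (Subgroup.map_eq_bot_iff N).mp hmapP
  rwa [QuotientGroup.ker_mk'] at this
end

section
/- Let G be a finite PNC-group and let H be a subgroup with H ≤ Z(G). If H ∩ G' = 1, then the quotient group G/H is also a PNC-group. -/
/-- If `G` is a finite PNC-group and `H ≤ Z(G)` satisfies `H ∩ G' = 1`, then `G / H` is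
also a PNC-group. -/
theorem quotient_isPNCGroup_of_le_center (G : Type*) [Group G] [Finite G]
    (hpnc : IsPNCGroup G) (H : Subgroup G) (hZ : H ≤ Subgroup.center G)
    (hcomm : H ⊓ commutator G = ⊥) :
    haveI : H.Normal := ⟨fun n hn g => by
      rw [Subgroup.mem_center_iff.mp (hZ hn) g, mul_inv_cancel_right]; exact hn⟩
    IsPNCGroup (G ⧸ H) := by
  haveI : H.Normal := ⟨fun n hn g => by
    rw [Subgroup.mem_center_iff.mp (hZ hn) g, mul_inv_cancel_right]; exact hn⟩
  intro Kbar hKcomm hKnp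
  set π := QuotientGroup.mk' H with hπ
  have hsurj : Function.Surjective π := QuotientGroup.mk'_surjective H
  set K : Subgroup G := Kbar.comap π with hK
  have hmap : K.map π = Kbar := Subgroup.map_comap_eq_self_of_surjective hsurj Kbar
  -- K is commutative
  have hcommK : IsMulCommutative K := by
    constructor
    constructor
    rintro ⟨a, ha⟩ ⟨b, hb⟩
    ext
    show a * b = b * a
    have h1 : a * b * a⁻¹ * b⁻¹ ∈ H := by
      have : π (a * b * a⁻¹ * b⁻¹) = 1 := by
        simp only [map_mul, map_inv]
        have := Subgroup.mul_comm_of_mem_isMulCommutative (H := Kbar) (a := π a) (b := π b) ha hb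
        rw [this]
        group
      rwa [← QuotientGroup.ker_mk' H, MonoidHom.mem_ker]
    have h2 : a * b * a⁻¹ * b⁻¹ ∈ commutator G := by
      open scoped commutatorElement in
      have : a * b * a⁻¹ * b⁻¹ = ⁅a, b⁆ := by group
      rw [this, commutator_def]
      exact Subgroup.commutator_mem_commutator (Subgroup.mem_top a) (Subgroup.mem_top b)
    have : a * b * a⁻¹ * b⁻¹ ∈ H ⊓ commutator G := ⟨h1, h2⟩
    rw [hcomm, Subgroup.mem_bot] at this
    rw [mul_inv_eq_one] at this
    exact mul_inv_eq_iff_eq_mul.mp this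
  -- K is not a p-group
  have hKnp' : ∀ p : ℕ, p.Prime → ¬ IsPGroup p K := by
    intro p hp hpg
    exact hKnp p hp (hmap ▸ hpg.map π)
  have hNC := hpnc K hcommK hKnp'
  -- conclude
  apply le_antisymm
  · intro x hx
    obtain ⟨g, rfl⟩ := hsurj x
    have hgN : g ∈ Subgroup.normalizer (K : Set G) := by
      rw [Subgroup.mem_normalizer_iff]
      intro k
      constructor
      · intro hk
        show π (g * k * g⁻¹) ∈ Kbar
        simp only [map_mul, map_inv]
        exact (Subgroup.mem_normalizer_iff.mp hx (π k)).mp hk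
      · intro hk
        have : π (g * k * g⁻¹) ∈ Kbar := hk
        simp only [map_mul, map_inv] at this
        exact (Subgroup.mem_normalizer_iff.mp hx (π k)).mpr this
    rw [hNC] at hgN
    rw [Subgroup.mem_centralizer_iff]
    intro kb hkb
    rw [← hmap] at hkb
    obtain ⟨k, hk, rfl⟩ := hkb
    have := hgN k hk
    show π k * π g = π g * π k
    rw [← map_mul, ← map_mul, this]
  · intro x hx
    rw [Subgroup.mem_normalizer_iff]
    intro kb
    have hc := Subgroup.mem_centralizer_iff.mp hx
    constructor
    · intro hk
      have h := hc kb hk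
      have : x * kb * x⁻¹ = kb := by rw [← h, mul_assoc, mul_inv_cancel, mul_one]
      rwa [this]
    · intro hk
      have h := hc _ hk
      have h1 : x * kb = x * (x * kb * x⁻¹) := by rw [← h]; group
      have h2 := mul_left_cancel h1
      rwa [← h2] at hk
end

section
/- Let G be a finite non-nilpotent A-group (all Sylow subgroups of G are abelian). If G is a PNC-group, then G/Z(G) is also a PNC-group. -/
/-- A finite nilpotent group all of whose Sylow subgroups are commutative is commutative. -/
private lemma mul_comm_of_nilpotent_of_sylow_comm {K : Type*} [Group K] [Finite K]
    (h : Group.IsNilpotent K)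
    (hS : ∀ p : ℕ, p.Prime → ∀ P : Sylow p K, IsMulCommutative (P : Subgroup K))
    (a b : K) : a * b = b * a := by
  obtain ⟨e⟩ := ((isNilpotent_of_finite_tfae (G := K)).out 0 4).mp h
  have key : e.symm a * e.symm b = e.symm b * e.symm a := by
    funext p P
    haveI : IsMulCommutative (P : Subgroup K) :=
      hS p (Nat.prime_of_mem_primeFactors p.2) P
    simpa using mul_comm' ((e.symm a) p P) ((e.symm b) p P)
  calc a * b = e (e.symm a * e.symm b) := by rw [map_mul]; simp
    _ = e (e.symm b * e.symm a) := by rw [key]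
    _ = b * a := by rw [map_mul]; simp

/-- A nilpotent subgroup of a finite group with all Sylow subgroups commutative
is commutative. -/
private lemma isCommutative_of_nilpotent {G : Type*} [Group G] [Finite G]
    (hA : ∀ (p : ℕ), p.Prime → ∀ P : Sylow p G, IsMulCommutative (P : Subgroup G))
    (H : Subgroup G) (hnil : Group.IsNilpotent H) : IsMulCommutative H := by
  refine ⟨⟨fun a b => ?_⟩⟩
  refine mul_comm_of_nilpotent_of_sylow_comm hnil ?_ a b
  intro p hp P
  -- `P` is a `p`-subgroup of `G` (via the embedding), hence lies in an abelian Sylow of `G`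
  have hPG : IsPGroup p ((P : Subgroup ↥H).map H.subtype) := P.isPGroup'.map _
  obtain ⟨Q, hQ⟩ := hPG.exists_le_sylow
  haveI := hA p hp Q
  refine ⟨⟨fun x y => ?_⟩⟩
  have hx : ((x : ↥H) : G) ∈ (Q : Subgroup G) := hQ ⟨(x : ↥H), x.2, rfl⟩
  have hy : ((y : ↥H) : G) ∈ (Q : Subgroup G) := hQ ⟨(y : ↥H), y.2, rfl⟩
  have hcomm : ((x : ↥H) : G) * ((y : ↥H) : G) = ((y : ↥H) : G) * ((x : ↥H) : G) :=
    Subgroup.mul_comm_of_mem_isMulCommutative (H := (Q : Subgroup G)) hx hy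
  exact Subtype.ext (Subtype.ext hcomm)

open scoped commutatorElement in
/-- If a finite non-nilpotent `A`-group (all Sylow subgroups abelian) is a PNC-group, then
so is `G / Z(G)`. -/
theorem quotient_center_isPNCGroup (G : Type*) [Group G] [Finite G]
    (hA : ∀ (p : ℕ), p.Prime → ∀ P : Sylow p G, IsMulCommutative (P : Subgroup G))
    (hnn : ¬ Group.IsNilpotent G) (hpnc : IsPNCGroup G) :
    IsPNCGroup (G ⧸ Subgroup.center G) := by
  intro Hbar hcomm hnp
  set φ := QuotientGroup.mk' (Subgroup.center G) with hφ
  set H : Subgroup G := Hbar.comap φ with hH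
  -- commutators of elements of `H` are central in `G`
  have hc : ∀ x y : G, x ∈ H → y ∈ H → ⁅x, y⁆ ∈ Subgroup.center G := by
    intro x y hx hy
    rw [← QuotientGroup.ker_mk' (Subgroup.center G), MonoidHom.mem_ker,
      map_commutatorElement, commutatorElement_eq_one_iff_mul_comm]
    haveI := hcomm
    exact Subgroup.mul_comm_of_mem_isMulCommutative (H := Hbar) hx hy
  -- `H` is nilpotent (of class ≤ 2)
  have hnil : Group.IsNilpotent ↥H := by
    rw [nilpotent_iff_lowerCentralSeries]
    refine ⟨2, lowerCentralSeries_succ_eq_bot ⊤ ?_⟩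
    rw [Subgroup.top_lowerCentralSeries_one, commutator_def, Subgroup.commutator_le]
    intro g₁ _ g₂ _
    rw [Subgroup.mem_center_iff]
    intro z
    exact Subtype.ext (Subgroup.mem_center_iff.mp (hc g₁ g₂ g₁.2 g₂.2) z)
  -- hence `H` is commutative
  have hHcomm : IsMulCommutative H := isCommutative_of_nilpotent hA H hnil
  -- `H` is not a `p`-group
  have hHnp : ∀ p : ℕ, p.Prime → ¬ IsPGroup p H := by
    intro p hp hPH
    apply hnp p hp
    have : Hbar = H.map φ :=
      (Subgroup.map_comap_eq_self_of_surjective (QuotientGroup.mk'_surjective _) Hbar).symm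
    rw [this]
    exact hPH.map φ
  -- apply the PNC property of `G`
  have hNC : Subgroup.normalizer (H : Set G) = Subgroup.centralizer (H : Set G) := hpnc H hHcomm hHnp
  apply le_antisymm
  · -- normalizer ≤ centralizer
    intro g hg
    obtain ⟨x, rfl⟩ := QuotientGroup.mk'_surjective (Subgroup.center G) g
    have hxN : x ∈ Subgroup.normalizer (H : Set G) := by
      rw [Subgroup.mem_normalizer_iff]
      intro h
      have := (Subgroup.mem_normalizer_iff.mp hg) (φ h)
      simpa [hH, hφ, Subgroup.mem_comap, map_mul, map_inv] using this
    rw [hNC] at hxN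
    rw [Subgroup.mem_centralizer_iff]
    intro h hh
    obtain ⟨y, rfl⟩ := QuotientGroup.mk'_surjective (Subgroup.center G) h
    have hy : y ∈ H := by rwa [hH, Subgroup.mem_comap]
    have hxy : y * x = x * y := Subgroup.mem_centralizer_iff.mp hxN y hy
    rw [← map_mul, ← map_mul, hxy]
  · -- centralizer ≤ normalizer (general fact)
    intro g hg
    rw [Subgroup.mem_centralizer_iff] at hg
    rw [Subgroup.mem_normalizer_iff]
    intro h
    constructor
    · intro hh
      have : h * g = g * h := hg h hh
      have : g * h * g⁻¹ = h := by
        rw [← this]; group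
      rwa [this]
    · intro hh
      have h1 : (g * h * g⁻¹) * g = g * (g * h * g⁻¹) := hg _ hh
      have e1 : (g * h * g⁻¹) * g = g * h := by group
      rw [e1] at h1
      have h2 : h = g * h * g⁻¹ := mul_left_cancel h1
      rwa [h2]
end

section
/- Let G be a nontrivial finite SBP-group such that the Fitting subgroup F(G) is a p-group for a fixed prime p (i.e., every nilpotent normal subgroup of G is a p-group). Then every p-central extension of G is a PNC-group: if H is a finite group, A is a subgroup with A ≤ Z(H) and H/A ≅ G, and Z(H) is a p-group, then H is a PNC-group. -/
section Aux

open Subgroup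

/-- If a nontrivial group is both an `a`-group and a `b`-group, then `a = b`. -/
lemma aux_two_primes {K : Type*} [Group K] [Nontrivial K] {a b : ℕ}
    (ha : a.Prime) (hb : b.Prime) (hA : IsPGroup a K) (hB : IsPGroup b K) : a = b := by
  obtain ⟨k, hk⟩ := exists_ne (1 : K)
  obtain ⟨m, hm⟩ := hA k
  obtain ⟨l, hl⟩ := hB k
  have h1 : orderOf k ∣ a ^ m := orderOf_dvd_of_pow_eq_one hm
  have h2 : orderOf k ∣ b ^ l := orderOf_dvd_of_pow_eq_one hl
  have h3 : orderOf k ≠ 1 := by simpa [orderOf_eq_one_iff] using hk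
  obtain ⟨i, hi, hio⟩ := (Nat.dvd_prime_pow ha).mp h1
  have hi0 : i ≠ 0 := by rintro rfl; simp [hio] at h3
  have hab : a ∣ b ^ l := (dvd_pow_self a hi0).trans (hio ▸ h2)
  exact (Nat.prime_dvd_prime_iff_eq ha hb).mp (ha.dvd_of_dvd_pow hab)

/-- A central-type extension of a `p`-group by a `p`-group is a `p`-group. -/
lemma aux_pext {H G : Type*} [Group H] [Group G] {p : ℕ} (f : H →* G)
    (hk : IsPGroup p f.ker) (hG : IsPGroup p G) : IsPGroup p H := by
  intro g
  obtain ⟨a, ha⟩ := hG (f g)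
  have h1 : g ^ p ^ a ∈ f.ker := by
    rw [MonoidHom.mem_ker, map_pow, ha]
  obtain ⟨b, hb⟩ := hk ⟨g ^ p ^ a, h1⟩
  refine ⟨a + b, ?_⟩
  have := congrArg (Subtype.val) hb
  simpa [pow_add, pow_mul] using this

lemma aux_centralizer_le_normalizer {G : Type*} [Group G] (K : Subgroup G) :
    Subgroup.centralizer (K : Set G) ≤ (Subgroup.normalizer (K : Set G)) := by
  intro g hg
  rw [Subgroup.mem_normalizer_iff]
  intro h
  constructor
  · intro hh
    have h1 : h * g = g * h := Subgroup.mem_centralizer_iff.mp hg h hh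
    have : g * h * g⁻¹ = h := by rw [← h1]; group
    rwa [this]
  · intro hh
    have h1 : (g * h * g⁻¹) * g = g * (g * h * g⁻¹) := Subgroup.mem_centralizer_iff.mp hg _ hh
    have : h = g * h * g⁻¹ := by
      have h2 : g * h = g * (g * h * g⁻¹) := by
        calc g * h = (g * h * g⁻¹) * g := by group
        _ = g * (g * h * g⁻¹) := h1
      exact mul_left_cancel h2
    rwa [← this] at hh

end Aux

section Simple

open Subgroup

variable {G : Type*} [Group G] [Finite G]

/-- In a non-nilpotent "simple SBP" group, Sylow subgroups for primes dividing the order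
are proper, nontrivial and self-normalizing. -/
lemma aux_sylow_self_norm
    (hSBP : ∀ K : Subgroup G, K ≠ ⊤ → ∃ q : ℕ, q.Prime ∧ IsPGroup q K)
    (hnil : ¬ Group.IsNilpotent G)
    (hsimple : ∀ N : Subgroup G, N.Normal → N = ⊥ ∨ N = ⊤)
    {s : ℕ} (hs : s.Prime) (hdvd : s ∣ Nat.card G) (S : Sylow s G) :
    (Subgroup.normalizer ((S : Subgroup G) : Set G)) = S ∧ (S : Subgroup G) ≠ ⊤ ∧ (S : Subgroup G) ≠ ⊥ := by
  haveI : Fact s.Prime := ⟨hs⟩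
  have hSbot : (S : Subgroup G) ≠ ⊥ := S.ne_bot_of_dvd_card hdvd
  have hStop : (S : Subgroup G) ≠ ⊤ := by
    intro h
    apply hnil
    have hPG : IsPGroup s G := by
      intro g
      obtain ⟨n, hn⟩ := S.isPGroup' ⟨g, h ▸ Subgroup.mem_top g⟩
      exact ⟨n, by simpa [Subtype.ext_iff] using hn⟩
    exact hPG.isNilpotent
  refine ⟨?_, hStop, hSbot⟩
  have hn : (Subgroup.normalizer ((S : Subgroup G) : Set G)) ≠ ⊤ := by
    intro h
    rcases hsimple S (Subgroup.normalizer_eq_top_iff.mp h) with h' | h'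
    · exact hSbot h'
    · exact hStop h'
  obtain ⟨t, ht, htp⟩ := hSBP _ hn
  haveI : Nontrivial (S : Subgroup G) := (Subgroup.nontrivial_iff_ne_bot _).mpr hSbot
  have hts : t = s :=
    aux_two_primes ht hs (htp.to_le Subgroup.le_normalizer) S.isPGroup'
  exact S.3 (hts ▸ htp) Subgroup.le_normalizer

/-- Distinct Sylow subgroups (for a prime dividing the order) of a non-nilpotent simple
SBP group intersect trivially. -/
lemma aux_sylow_TI
    (hSBP : ∀ K : Subgroup G, K ≠ ⊤ → ∃ q : ℕ, q.Prime ∧ IsPGroup q K)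
    (hnil : ¬ Group.IsNilpotent G)
    (hsimple : ∀ N : Subgroup G, N.Normal → N = ⊥ ∨ N = ⊤)
    {s : ℕ} (hs : s.Prime) (hdvd : s ∣ Nat.card G) :
    ∀ S S' : Sylow s G, S ≠ S' → (S ⊓ S' : Subgroup G) = ⊥ := by
  haveI : Fact s.Prime := ⟨hs⟩
  by_contra hcon
  push_neg at hcon
  obtain ⟨S₁, S₂, hne12, hD12⟩ := hcon
  classical
  set f : Sylow s G × Sylow s G → ℕ :=
    fun P => Nat.card ((P.1 : Subgroup G) ⊓ (P.2 : Subgroup G) : Subgroup G) with hf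
  set s0 : Set (Sylow s G × Sylow s G) :=
    {P | P.1 ≠ P.2 ∧ ((P.1 : Subgroup G) ⊓ (P.2 : Subgroup G) : Subgroup G) ≠ ⊥} with hs0
  obtain ⟨⟨T, T'⟩, hmem, hmax⟩ :=
    Set.Finite.exists_maximalFor f s0 (Set.toFinite _) ⟨(S₁, S₂), hne12, hD12⟩
  obtain ⟨hTT', hDne⟩ := hmem
  set D : Subgroup G := (T : Subgroup G) ⊓ (T' : Subgroup G) with hD
  -- Sylow subgroups with inclusions coincide
  have sylow_eq : ∀ U V : Sylow s G, (U : Subgroup G) ≤ V → U = V := by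
    intro U V h
    exact Sylow.ext (U.3 V.isPGroup' h).symm
  have hDT : D ≤ (T : Subgroup G) := inf_le_left
  have hDT' : D ≤ (T' : Subgroup G) := inf_le_right
  have hDneT : D ≠ (T : Subgroup G) := by
    intro h
    exact hTT' (sylow_eq T T' (h ▸ hDT'))
  have hDneT' : D ≠ (T' : Subgroup G) := by
    intro h
    exact hTT' (sylow_eq T' T (h ▸ hDT)).symm
  -- the normalizer of D is a proper s-subgroup
  have hTtop : (T : Subgroup G) ≠ ⊤ :=
    (aux_sylow_self_norm hSBP hnil hsimple hs hdvd T).2.1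
  have hNne : (Subgroup.normalizer (D : Set G)) ≠ ⊤ := by
    intro h
    rcases hsimple D (Subgroup.normalizer_eq_top_iff.mp h) with h' | h'
    · exact hDne h'
    · exact hTtop (top_le_iff.mp (h' ▸ hDT))
  obtain ⟨t, ht, htp⟩ := hSBP _ hNne
  haveI : Nontrivial D := (Subgroup.nontrivial_iff_ne_bot _).mpr hDne
  have hts : t = s :=
    aux_two_primes ht hs (htp.to_le Subgroup.le_normalizer) (T.isPGroup'.to_le hDT)
  obtain ⟨S'', hS''⟩ := (hts ▸ htp).exists_le_sylow
  have hDS'' : D ≤ (S'' : Subgroup G) := Subgroup.le_normalizer.trans hS''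
  -- normalizer growth inside a Sylow subgroup
  have grow : ∀ U : Sylow s G, D ≤ (U : Subgroup G) → D ≠ (U : Subgroup G) →
      ∃ g : G, g ∈ (U : Subgroup G) ∧ g ∉ D ∧ g ∈ (Subgroup.normalizer (D : Set G)) := by
    intro U hDU hDneU
    haveI : Group.IsNilpotent (U : Subgroup G) := U.isPGroup'.isNilpotent
    have hlt : D.subgroupOf (U : Subgroup G) < ⊤ := by
      rw [lt_top_iff_ne_top]
      intro h
      exact hDneU (le_antisymm hDU (Subgroup.subgroupOf_eq_top.mp h))
    have hgrow := normalizerCondition_of_isNilpotent _ hlt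
    obtain ⟨g', hg'n, hg'D⟩ := SetLike.exists_of_lt hgrow
    refine ⟨(g' : G), g'.2, ?_, ?_⟩
    · intro h
      exact hg'D (Subgroup.mem_subgroupOf.mpr h)
    · rw [Subgroup.mem_normalizer_iff]
      intro u
      by_cases hu : u ∈ (U : Subgroup G)
      · have h2 := Subgroup.mem_normalizer_iff.mp hg'n ⟨u, hu⟩
        simp only [Subgroup.mem_subgroupOf] at h2
        simpa using h2
      · constructor
        · intro h; exact absurd (hDU h) hu
        · intro h
          exfalso
          apply hu
          have hgU : (g' : G) ∈ (U : Subgroup G) := g'.2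
          have : u = (g' : G)⁻¹ * ((g' : G) * u * (g' : G)⁻¹) * (g' : G) := by group
          rw [this]
          exact Subgroup.mul_mem _ (Subgroup.mul_mem _ (Subgroup.inv_mem _ hgU) (hDU h)) hgU
  -- conclude S'' = T
  have card_lt : ∀ U : Sylow s G, D ≤ (U : Subgroup G) → D ≠ (U : Subgroup G) → U ≠ S'' → False := by
    intro U hDU hDneU hUS
    obtain ⟨g, hgU, hgD, hgN⟩ := grow U hDU hDneU
    have hg'' : g ∈ (S'' : Subgroup G) := hS'' hgN
    have hle : D ≤ (U : Subgroup G) ⊓ (S'' : Subgroup G) := le_inf hDU hDS''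
    have hne' : D ≠ (U : Subgroup G) ⊓ (S'' : Subgroup G) := by
      intro h
      rw [h] at hgD
      exact hgD ⟨hgU, hg''⟩
    have hmem' : (U, S'') ∈ s0 := by
      refine ⟨hUS, ?_⟩
      intro h
      exact hDne (le_bot_iff.mp (h ▸ hle))
    have hcardle : f (T, T') ≤ f (U, S'') := Subgroup.card_le_of_le hle
    have := hmax hmem' hcardle
    have heq : D = (U : Subgroup G) ⊓ (S'' : Subgroup G) :=
      (Subgroup.eq_of_le_of_card_ge hle this)
    exact hne' heq
  have hTS : T = S'' := by
    by_contra h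
    exact card_lt T hDT hDneT h
  have hT'S : T' = S'' := by
    by_contra h
    exact card_lt T' hDT' hDneT' h
  exact hTT' (hTS.trans hT'S.symm)

/-- Counting: the set of nontrivial `s`-elements of a non-nilpotent simple SBP group has
cardinality `n - m` where `m * c = n`, `c ≥ s` is the order of a Sylow `s`-subgroup. -/
lemma aux_count [Fintype G]
    (hSBP : ∀ K : Subgroup G, K ≠ ⊤ → ∃ q : ℕ, q.Prime ∧ IsPGroup q K)
    (hnil : ¬ Group.IsNilpotent G)
    (hsimple : ∀ N : Subgroup G, N.Normal → N = ⊥ ∨ N = ⊤)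
    {s : ℕ} (hs : s.Prime) (hdvd : s ∣ Nat.card G) :
    ∃ (m : ℕ) (E : Finset G), s * m ≤ Nat.card G ∧ E.card + m = Nat.card G ∧
      ∀ g : G, g ∈ E ↔ (g ≠ 1 ∧ ∃ S : Sylow s G, g ∈ (S : Subgroup G)) := by
  classical
  haveI : Fact s.Prime := ⟨hs⟩
  have hcards : ∀ S : Sylow s G, Nat.card (S : Subgroup G) = s ^ (Nat.factorization (Nat.card G)) s := fun S =>
    S.card_eq_multiplicity
  set c := s ^ (Nat.factorization (Nat.card G)) s with hc
  have hTI := aux_sylow_TI hSBP hnil hsimple hs hdvd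
  obtain ⟨S₀⟩ := (inferInstance : Nonempty (Sylow s G))
  have hnorm := (aux_sylow_self_norm hSBP hnil hsimple hs hdvd S₀).1
  set m := Nat.card (Sylow s G) with hm
  have hmc : c * m = Nat.card G := by
    have h1 : m = (Subgroup.normalizer ((S₀ : Subgroup G) : Set G)).index := S₀.card_eq_index_normalizer
    rw [hnorm] at h1
    have h2 := Subgroup.card_mul_index (S₀ : Subgroup G)
    rw [hcards S₀, ← h1] at h2
    exact h2
  have hsc : s ≤ c := by
    have h1 : 1 ≤ (Nat.factorization (Nat.card G)) s := by
      have hn0 : Nat.card G ≠ 0 := Nat.card_pos.ne'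
      exact (Nat.Prime.factorization_pos_of_dvd hs hn0 hdvd)
    calc s = s ^ 1 := (pow_one s).symm
    _ ≤ c := Nat.pow_le_pow_right hs.pos h1
  haveI : Fintype (Sylow s G) := Fintype.ofFinite _
  set E : Finset G := (Finset.univ : Finset (Sylow s G)).biUnion
    (fun S => (((S : Subgroup G) : Set G).toFinset.erase 1)) with hE
  have hmemE : ∀ g : G, g ∈ E ↔ (g ≠ 1 ∧ ∃ S : Sylow s G, g ∈ (S : Subgroup G)) := by
    intro g
    simp only [hE, Finset.mem_biUnion, Finset.mem_univ, true_and,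
      Finset.mem_erase, Set.mem_toFinset, SetLike.mem_coe]
    tauto
  have hdisj : ∀ S ∈ (Finset.univ : Finset (Sylow s G)), ∀ S' ∈ Finset.univ, S ≠ S' →
      Disjoint (((S : Subgroup G) : Set G).toFinset.erase 1)
        (((S' : Subgroup G) : Set G).toFinset.erase 1) := by
    intro S _ S' _ hne
    rw [Finset.disjoint_left]
    intro g hg hg'
    simp only [Finset.mem_erase, Set.mem_toFinset, SetLike.mem_coe] at hg hg'
    have hmem2 : g ∈ ((S : Subgroup G) ⊓ (S' : Subgroup G) : Subgroup G) := ⟨hg.2, hg'.2⟩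
    rw [hTI S S' hne] at hmem2
    exact hg.1 (Subgroup.mem_bot.mp hmem2)
  have hcardE : E.card = m * (c - 1) := by
    rw [hE, Finset.card_biUnion hdisj]
    have h1 : ∀ S : Sylow s G, (((S : Subgroup G) : Set G).toFinset.erase 1).card = c - 1 := by
      intro S
      rw [Finset.card_erase_of_mem
        (by rw [Set.mem_toFinset]; exact SetLike.mem_coe.mpr (Subgroup.one_mem _))]
      congr 1
      rw [Set.toFinset_card, ← hcards S, Nat.card_eq_fintype_card]
      rfl
    rw [Finset.sum_congr rfl (fun S _ => h1 S), Finset.sum_const, smul_eq_mul,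
      Finset.card_univ, hm, Nat.card_eq_fintype_card]
  refine ⟨m, E, ?_, ?_, hmemE⟩
  · calc s * m ≤ c * m := Nat.mul_le_mul_right m hsc
    _ = Nat.card G := hmc
  · rw [hcardE]
    have hc1 : 1 ≤ c := le_trans hs.one_lt.le hsc
    calc m * (c - 1) + m = m * c := by
          rw [← Nat.mul_succ]
          congr 1
          omega
    _ = Nat.card G := by rw [mul_comm]; exact hmc

/-- A finite non-nilpotent group in which every proper subgroup has prime power order
cannot be simple. -/
lemma aux_no_simple
    (hSBP : ∀ K : Subgroup G, K ≠ ⊤ → ∃ q : ℕ, q.Prime ∧ IsPGroup q K)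
    (hnil : ¬ Group.IsNilpotent G)
    (hsimple : ∀ N : Subgroup G, N.Normal → N = ⊥ ∨ N = ⊤) : False := by
  classical
  haveI : Fintype G := Fintype.ofFinite G
  haveI : Nontrivial G := by
    rcases subsingleton_or_nontrivial G with h | h
    · exact absurd (inferInstance : Group.IsNilpotent G) hnil
    · exact h
  have hn2 : 2 ≤ Nat.card G := Finite.one_lt_card
  have hnotP : ∀ s : ℕ, s.Prime → ¬ IsPGroup s G := by
    intro s hs hP
    haveI : Fact s.Prime := ⟨hs⟩
    exact hnil hP.isNilpotent
  have hminFac : (Nat.card G).minFac.Prime := Nat.minFac_prime (by omega)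
  have hexists : ∃ r : ℕ, r.Prime ∧ r ∣ Nat.card G ∧ r ≠ (Nat.card G).minFac := by
    by_contra hcon
    push_neg at hcon
    apply hnotP (Nat.card G).minFac hminFac
    apply IsPGroup.of_card
    exact Nat.eq_prime_pow_of_unique_prime_dvd (by omega)
      (fun {q} hq hqd => hcon q hq hqd)
  obtain ⟨r, hr, hrd, hrne⟩ := hexists
  set a := min (Nat.card G).minFac r with ha
  set b := max (Nat.card G).minFac r with hb
  have hab : a < b := by
    rcases lt_or_gt_of_ne hrne with h | h
    · simp only [ha, hb]; omega
    · simp only [ha, hb]; omega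
  have hap : a.Prime := by
    rcases le_total (Nat.card G).minFac r with h | h
    · rw [ha, min_eq_left h]; exact hminFac
    · rw [ha, min_eq_right h]; exact hr
  have hbp : b.Prime := by
    rcases le_total (Nat.card G).minFac r with h | h
    · rw [hb, max_eq_right h]; exact hr
    · rw [hb, max_eq_left h]; exact hminFac
  have had : a ∣ Nat.card G := by
    rcases le_total (Nat.card G).minFac r with h | h
    · rw [ha, min_eq_left h]; exact Nat.minFac_dvd _
    · rw [ha, min_eq_right h]; exact hrd
  have hbd : b ∣ Nat.card G := by
    rcases le_total (Nat.card G).minFac r with h | h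
    · rw [hb, max_eq_right h]; exact hrd
    · rw [hb, max_eq_left h]; exact Nat.minFac_dvd _
  have ha2 : 2 ≤ a := hap.two_le
  have hb3 : 3 ≤ b := by
    have := hbp.two_le
    omega
  obtain ⟨ma, Ea, hma1, hma2, hmema⟩ := aux_count hSBP hnil hsimple hap had
  obtain ⟨mb, Eb, hmb1, hmb2, hmemb⟩ := aux_count hSBP hnil hsimple hbp hbd
  have hdisj : Disjoint Ea Eb := by
    rw [Finset.disjoint_left]
    intro g hga hgb
    obtain ⟨hg1, Sa, hSa⟩ := (hmema g).mp hga
    obtain ⟨-, Sb, hSb⟩ := (hmemb g).mp hgb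
    obtain ⟨ka, hka⟩ := Sa.isPGroup' ⟨g, hSa⟩
    obtain ⟨kb, hkb⟩ := Sb.isPGroup' ⟨g, hSb⟩
    have hka' : g ^ a ^ ka = 1 := by simpa [Subtype.ext_iff] using hka
    have hkb' : g ^ b ^ kb = 1 := by simpa [Subtype.ext_iff] using hkb
    have h1 : orderOf g ∣ a ^ ka := orderOf_dvd_of_pow_eq_one hka'
    have h2 : orderOf g ∣ b ^ kb := orderOf_dvd_of_pow_eq_one hkb'
    have hcop : Nat.Coprime (a ^ ka) (b ^ kb) :=
      Nat.Coprime.pow _ _ ((Nat.coprime_primes hap hbp).mpr (by omega))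
    have : orderOf g = 1 := Nat.eq_one_of_dvd_coprimes hcop h1 h2
    exact hg1 (orderOf_eq_one_iff.mp this)
  have hsub : Ea ∪ Eb ⊆ (Finset.univ : Finset G).erase 1 := by
    intro g hg
    rcases Finset.mem_union.mp hg with h | h
    · exact Finset.mem_erase.mpr ⟨((hmema g).mp h).1, Finset.mem_univ g⟩
    · exact Finset.mem_erase.mpr ⟨((hmemb g).mp h).1, Finset.mem_univ g⟩
  have hcardsub : Ea.card + Eb.card ≤ Nat.card G - 1 := by
    have h1 := Finset.card_le_card hsub
    rw [Finset.card_union_of_disjoint hdisj] at h1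
    have h2 : ((Finset.univ : Finset G).erase 1).card = Nat.card G - 1 := by
      rw [Finset.card_erase_of_mem (Finset.mem_univ 1), Finset.card_univ,
        ← Nat.card_eq_fintype_card]
    omega
  have h2ma : 2 * ma ≤ Nat.card G := le_trans (Nat.mul_le_mul_right ma ha2) hma1
  have h3mb : 3 * mb ≤ Nat.card G := le_trans (Nat.mul_le_mul_right mb hb3) hmb1
  omega

end Simple

section Structure

open Subgroup

variable {G : Type*} [Group G] [Finite G]

/-- The key structural fact: in a finite SBP-group whose nilpotent normal subgroups are
all `p`-groups and which is not itself a `p`-group, `q²` does not divide the order for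
any prime `q ≠ p`. -/
lemma aux_not_sq_dvd
    (hSBP : ∀ K : Subgroup G, K ≠ ⊤ → ∃ q : ℕ, q.Prime ∧ IsPGroup q K)
    {p : ℕ} (hp : p.Prime)
    (hF : ∀ N : Subgroup G, N.Normal → Group.IsNilpotent N → IsPGroup p N)
    (hnp : ¬ IsPGroup p G) {q : ℕ} (hq : q.Prime) (hqp : q ≠ p) :
    ¬ (q * q ∣ Nat.card G) := by
  intro hq2
  haveI : Fact p.Prime := ⟨hp⟩
  haveI : Fact q.Prime := ⟨hq⟩
  have hnil : ¬ Group.IsNilpotent G := by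
    intro h
    apply hnp
    have h1 : Group.IsNilpotent ((⊤ : Subgroup G)) := Group.isNilpotent_top.mpr h
    exact (hF ⊤ inferInstance h1).of_equiv Subgroup.topEquiv
  by_cases hsimple : ∀ N : Subgroup G, N.Normal → N = ⊥ ∨ N = ⊤
  · exact aux_no_simple hSBP hnil hsimple
  push_neg at hsimple
  obtain ⟨N, hNn, hNbot, hNtop⟩ := hsimple
  haveI : N.Normal := hNn
  have hNp : IsPGroup p N := by
    obtain ⟨t, ht, htp⟩ := hSBP N hNtop
    haveI : Fact t.Prime := ⟨ht⟩
    exact hF N hNn htp.isNilpotent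
  set f := QuotientGroup.mk' N with hfdef
  have hfsurj : Function.Surjective f := QuotientGroup.mk'_surjective N
  -- every proper subgroup of the quotient is a p-group
  have hQp : ∀ K : Subgroup (G ⧸ N), K ≠ ⊤ → IsPGroup p K := by
    intro K hK
    have hcom : K.comap f ≠ ⊤ := by
      intro h
      apply hK
      have := congrArg (Subgroup.map f) h
      rwa [Subgroup.map_comap_eq_self_of_surjective hfsurj,
        Subgroup.map_top_of_surjective f hfsurj] at this
    obtain ⟨t, ht, htp⟩ := hSBP _ hcom
    have hNle : N ≤ K.comap f := by
      intro x hx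
      rw [Subgroup.mem_comap]
      have : f x = 1 := by
        rw [← MonoidHom.mem_ker, hfdef, QuotientGroup.ker_mk']
        exact hx
      rw [this]
      exact K.one_mem
    haveI : Nontrivial N := (Subgroup.nontrivial_iff_ne_bot _).mpr hNbot
    have htpeq : t = p := aux_two_primes ht hp (htp.to_le hNle) hNp
    have hKmap : K = Subgroup.map f (K.comap f) :=
      (Subgroup.map_comap_eq_self_of_surjective hfsurj K).symm
    rw [hKmap]
    exact (htpeq ▸ htp).map _
  -- the quotient is not a p-group
  have hQnp : ¬ IsPGroup p (G ⧸ N) := by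
    intro h
    apply hnp
    refine aux_pext f ?_ h
    rw [hfdef, QuotientGroup.ker_mk']
    exact hNp
  -- q² divides the order of the quotient
  have hcard : Nat.card G = Nat.card (G ⧸ N) * Nat.card N :=
    Subgroup.card_eq_card_quotient_mul_card_subgroup N
  have hqN : ¬ q ∣ Nat.card N := by
    intro hd
    obtain ⟨k, hk⟩ := IsPGroup.iff_card.mp hNp
    rw [hk] at hd
    exact hqp ((Nat.prime_dvd_prime_iff_eq hq hp).mp (hq.dvd_of_dvd_pow hd))
  have hq2Q : q * q ∣ Nat.card (G ⧸ N) := by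
    have hcop : Nat.Coprime (q * q) (Nat.card N) :=
      Nat.Coprime.mul ((Nat.Prime.coprime_iff_not_dvd hq).mpr hqN)
        ((Nat.Prime.coprime_iff_not_dvd hq).mpr hqN)
    exact hcop.dvd_of_dvd_mul_right (hcard ▸ hq2)
  -- a subgroup of order q in the quotient
  obtain ⟨K, hKcard⟩ := Sylow.exists_subgroup_card_pow_prime q
    (show q ^ 1 ∣ Nat.card (G ⧸ N) from (pow_one q).symm ▸ (dvd_mul_right q q).trans hq2Q)
  rw [pow_one] at hKcard
  have hKtop : K ≠ ⊤ := by
    intro h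
    rw [h] at hKcard
    have h2 : Nat.card (⊤ : Subgroup (G ⧸ N)) = Nat.card (G ⧸ N) := Subgroup.card_top
    rw [h2] at hKcard
    rw [← hKcard] at hq2Q
    have h3 := Nat.le_of_dvd (by have := hq.two_le; omega) hq2Q
    nlinarith [hq.two_le]
  have hKp := hQp K hKtop
  obtain ⟨k, hk⟩ := IsPGroup.iff_card.mp hKp
  rw [hKcard] at hk
  have hk0 : k ≠ 0 := by
    rintro rfl
    rw [pow_zero] at hk
    exact hq.one_lt.ne' hk
  have hdp : p ∣ q := hk ▸ dvd_pow_self p hk0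
  exact hqp ((Nat.prime_dvd_prime_iff_eq hp hq).mp hdp).symm

end Structure

/-- Let `G` be a nontrivial finite SBP-group (every proper subgroup has prime power order)
whose Fitting subgroup is a `p`-group (every nilpotent normal subgroup is a `p`-group).
Then every `p`-central extension `H` of `G` (i.e. `H / A ≅ G` for some `A ≤ Z(H)`,
witnessed by a surjection `H →* G` with central kernel, with `Z(H)` a `p`-group) is a
PNC-group. -/
theorem pCentralExtension_isPNCGroup_of_SBP (G : Type*) [Group G] [Finite G] [Nontrivial G]
    (hSBP : ∀ K : Subgroup G, K ≠ ⊤ → ∃ q : ℕ, q.Prime ∧ IsPGroup q K)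
    (p : ℕ) (hp : p.Prime)
    (hF : ∀ N : Subgroup G, N.Normal → Group.IsNilpotent N → IsPGroup p N)
    (H : Type*) [Group H] [Finite H] (φ : H →* G) (hsurj : Function.Surjective φ)
    (hker : φ.ker ≤ Subgroup.center H)
    (hZ : IsPGroup p (Subgroup.center H)) :
    IsPNCGroup H := by
  intro K hcomm hnotP
  haveI : Fact p.Prime := ⟨hp⟩
  have hkerp : IsPGroup p φ.ker := hZ.to_le hker
  by_cases hGp : IsPGroup p G
  · exact absurd ((aux_pext φ hkerp hGp).to_subgroup K) (hnotP p hp)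
  refine le_antisymm ?_ (aux_centralizer_le_normalizer K)
  intro x hx
  set Kb := K.map φ with hKb
  -- main claim: the normalizer of Kb in G is Kb itself
  have hmain : (Subgroup.normalizer (Kb : Set G)) = Kb := by
    by_cases htop : Kb = ⊤
    · rw [htop]
      exact Subgroup.normalizer_eq_top_iff.mpr inferInstance
    obtain ⟨t, ht, htp⟩ := hSBP Kb htop
    haveI : Fact t.Prime := ⟨ht⟩
    have hKbbot : Kb ≠ ⊥ := by
      intro h
      apply hnotP p hp
      have hKker : K ≤ φ.ker := by
        intro k hk
        rw [MonoidHom.mem_ker]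
        have h1 : φ k ∈ Kb := Subgroup.mem_map_of_mem φ hk
        rw [h] at h1
        exact Subgroup.mem_bot.mp h1
      exact hkerp.to_le hKker
    haveI : Nontrivial Kb := (Subgroup.nontrivial_iff_ne_bot _).mpr hKbbot
    have htne : t ≠ p := by
      rintro rfl
      apply hnotP t ht
      intro k
      obtain ⟨a, ha⟩ := htp ⟨φ (k : H), Subgroup.mem_map_of_mem φ k.2⟩
      have h1 : φ ((k : H) ^ t ^ a) = 1 := by
        rw [map_pow]
        simpa [Subtype.ext_iff] using ha
      have h2 : (k : H) ^ t ^ a ∈ φ.ker := MonoidHom.mem_ker.mpr h1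
      obtain ⟨b, hb⟩ := hkerp ⟨(k : H) ^ t ^ a, h2⟩
      refine ⟨a + b, ?_⟩
      have h3 : ((k : H) ^ t ^ a) ^ t ^ b = 1 := by simpa [Subtype.ext_iff] using hb
      have h4 : (k : H) ^ t ^ (a + b) = 1 := by
        rw [pow_add, pow_mul]
        exact h3
      exact Subtype.ext (by simpa using h4)
    have hn : (Subgroup.normalizer (Kb : Set G)) ≠ ⊤ := by
      intro h
      have hnorm : Kb.Normal := Subgroup.normalizer_eq_top_iff.mp h
      have h1 : IsPGroup p Kb := hF Kb hnorm htp.isNilpotent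
      exact htne (aux_two_primes ht hp htp h1)
    obtain ⟨u, hu, hup⟩ := hSBP _ hn
    have hut : u = t :=
      aux_two_primes hu ht (hup.to_le Subgroup.le_normalizer) htp
    subst hut
    have hsq := aux_not_sq_dvd hSBP hp hF hGp hu htne
    obtain ⟨c, hc⟩ := IsPGroup.iff_card.mp hup
    have hc1 : c ≤ 1 := by
      by_contra h
      apply hsq
      have h1 : u * u ∣ u ^ c := by
        have : u ^ 2 ∣ u ^ c := pow_dvd_pow u (by omega)
        simpa [pow_two] using this
      exact h1.trans (hc ▸ Subgroup.card_subgroup_dvd_card (Subgroup.normalizer (Kb : Set G)))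
    have hcard2 : 2 ≤ Nat.card Kb := Finite.one_lt_card
    have hdvd : Nat.card Kb ∣ Nat.card (Subgroup.normalizer (Kb : Set G)) :=
      Subgroup.card_dvd_of_le Subgroup.le_normalizer
    have hcardn : Nat.card (Subgroup.normalizer (Kb : Set G)) = u := by
      interval_cases c
      · rw [pow_zero] at hc
        rw [hc] at hdvd
        have := Nat.le_of_dvd one_pos hdvd
        omega
      · rw [pow_one] at hc
        exact hc
    have hcardKb : Nat.card Kb = u := by
      rw [hcardn] at hdvd
      rcases (Nat.dvd_prime hu).mp hdvd with h | h
      · omega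
      · exact h
    exact (Subgroup.eq_of_le_of_card_ge Subgroup.le_normalizer (by rw [hcardn, hcardKb])).symm
  -- transfer: φ x normalizes Kb
  have hφx : φ x ∈ Kb := by
    rw [← hmain, Subgroup.mem_normalizer_iff]
    intro g
    constructor
    · intro hg
      obtain ⟨v, hv, rfl⟩ := hg
      refine ⟨x * v * x⁻¹, (Subgroup.mem_normalizer_iff.mp hx v).mp hv, by
        simp [map_mul, map_inv]⟩
    · intro hg
      obtain ⟨v, hv, hveq⟩ := hg
      have hgx : g = φ (x⁻¹ * v * x) := by
        have h1 : φ x * g * (φ x)⁻¹ = φ v := hveq.symm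
        have h2 : g = (φ x)⁻¹ * φ v * φ x := by rw [← h1]; group
        rw [h2]
        simp [map_mul, map_inv]
      have hvK : x⁻¹ * v * x ∈ K := by
        have := (Subgroup.mem_normalizer_iff.mp ((Subgroup.normalizer (K : Set H)).inv_mem hx) v).mp hv
        simpa using this
      rw [hgx]
      exact Subgroup.mem_map_of_mem φ hvK
  -- conclude that x centralizes K
  obtain ⟨k, hk, hfk⟩ := hφx
  have hz : x * k⁻¹ ∈ φ.ker := by
    rw [MonoidHom.mem_ker, map_mul, map_inv, hfk]
    group
  have hzc : x * k⁻¹ ∈ Subgroup.center H := hker hz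
  rw [Subgroup.mem_centralizer_iff]
  intro h hh
  have hhK : h ∈ K := hh
  have hcom : k * h = h * k := by
    have := hcomm.is_comm.comm ⟨k, hk⟩ ⟨h, hhK⟩
    simpa [Subtype.ext_iff] using this
  have hcz := Subgroup.mem_center_iff.mp hzc
  calc h * x = h * ((x * k⁻¹) * k) := by group
  _ = (h * (x * k⁻¹)) * k := by group
  _ = ((x * k⁻¹) * h) * k := by rw [hcz h]
  _ = (x * k⁻¹) * (h * k) := by group
  _ = (x * k⁻¹) * (k * h) := by rw [hcom]
  _ = x * h := by group
end

section
/- Let G be a finite non-abelian solvable group possessing an abelian maximal normal subgroup. If G is a PNC-group, then |G| = p^n · q for some primes p and q (not necessarily distinct) and some positive integer n. -/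
/-- If a finite non-abelian solvable group with an abelian maximal normal subgroup is a
PNC-group, then `|G| = p ^ n * q` for some primes `p`, `q` and some positive integer `n`. -/
theorem card_eq_of_isPNCGroup (G : Type*) [Group G] [Finite G] [Group.IsSolvable G]
    (hG : ¬ ∀ a b : G, a * b = b * a)
    (N : Subgroup G) (hN : N.Normal) (hNcomm : IsMulCommutative N) (hNne : N ≠ ⊤)
    (hNmax : ∀ M : Subgroup G, M.Normal → N < M → M = ⊤)
    (hpnc : IsPNCGroup G) :
    ∃ (p q n : ℕ), p.Prime ∧ q.Prime ∧ 0 < n ∧ Nat.card G = p ^ n * q := by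
  haveI := hN
  -- the quotient is nontrivial
  obtain ⟨x, hx⟩ : ∃ x : G, x ∉ N := by
    by_contra h
    push_neg at h
    exact hNne (Subgroup.eq_top_iff' N |>.mpr h)
  haveI : Nontrivial (G ⧸ N) := by
    refine ⟨⟨QuotientGroup.mk' N x, 1, fun h => hx ?_⟩⟩
    rwa [QuotientGroup.mk'_apply, QuotientGroup.eq_one_iff] at h
  -- the quotient is simple
  haveI hsimple : IsSimpleGroup (G ⧸ N) := by
    refine ⟨fun H hH => ?_⟩
    have hle : N ≤ H.comap (QuotientGroup.mk' N) := by
      intro n hn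
      have h1 : (QuotientGroup.mk' N) n = 1 := by
        rw [QuotientGroup.mk'_apply, QuotientGroup.eq_one_iff]; exact hn
      rw [Subgroup.mem_comap, h1]
      exact H.one_mem
    rcases hle.lt_or_eq with hlt | heq
    · right
      have := hNmax _ (hH.comap _) hlt
      have := Subgroup.map_comap_eq_self_of_surjective
        (QuotientGroup.mk'_surjective N) H
      rw [← this, ‹H.comap (QuotientGroup.mk' N) = ⊤›]
      exact Subgroup.map_top_of_surjective _ (QuotientGroup.mk'_surjective N)
    · left
      have := Subgroup.map_comap_eq_self_of_surjective
        (QuotientGroup.mk'_surjective N) H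
      rw [← this, ← heq]
      rw [eq_bot_iff]
      rintro y ⟨n, hn, rfl⟩
      rw [Subgroup.mem_bot, QuotientGroup.mk'_apply, QuotientGroup.eq_one_iff]
      exact hn
  -- the quotient is commutative (simple solvable)
  have hcomm : ∀ a b : G ⧸ N, a * b = b * a :=
    IsSimpleGroup.comm_iff_isSolvable.mpr inferInstance
  letI : CommGroup (G ⧸ N) := { (inferInstance : Group (G ⧸ N)) with mul_comm := hcomm }
  have hq : (Nat.card (G ⧸ N)).Prime := IsSimpleGroup.prime_card
  haveI : Fact (Nat.card (G ⧸ N)).Prime := ⟨hq⟩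
  haveI : IsCyclic (G ⧸ N) := isCyclic_of_prime_card rfl
  -- N is not central
  have hnotcentral : ¬ N ≤ Subgroup.center G := by
    intro hle
    apply hG
    intro a b
    refine commutative_of_cyclic_center_quotient (QuotientGroup.mk' N) ?_ a b
    rwa [QuotientGroup.ker_mk']
  -- N is a p-group
  obtain ⟨p, hp, hpg⟩ : ∃ p : ℕ, p.Prime ∧ IsPGroup p N := by
    by_contra h
    push_neg at h
    have := hpnc N hNcomm h
    rw [Subgroup.normalizer_eq_top_iff.mpr hN] at this
    exact hnotcentral (Subgroup.centralizer_eq_top_iff_subset.mp this.symm)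
  haveI : Fact p.Prime := ⟨hp⟩
  obtain ⟨n, hn⟩ := IsPGroup.iff_card.mp hpg
  refine ⟨p, Nat.card (G ⧸ N), n, hp, hq, ?_, ?_⟩
  · rcases n.eq_zero_or_pos with h | h
    swap
    · exact h
    · exfalso
      apply hnotcentral
      have : Nat.card N = 1 := by rw [hn, h, pow_zero]
      have hbot : N = ⊥ := Subgroup.eq_bot_of_card_eq N this
      rw [hbot]
      exact bot_le
  · rw [Subgroup.card_eq_card_quotient_mul_card_subgroup N, hn, mul_comm]
end

section
/- For every natural number n ≥ 2, the dihedral group D_{2n} of order 2n is a PNC-group if and only if n = p^k for some prime p and positive integer k. -/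
namespace PNCAux

open DihedralGroup

variable {n : ℕ}

lemma sr_inv (i : ZMod n) : (sr i)⁻¹ = sr i := rfl

lemma r_pow (i : ZMod n) (m : ℕ) : (r i) ^ m = r ((m : ZMod n) * i) := by
  induction m with
  | zero => simp only [pow_zero, Nat.cast_zero, zero_mul]; rfl
  | succ m ih =>
      rw [pow_succ, ih, r_mul_r]
      congr 1
      push_cast
      ring

lemma r_pow_n (i : ZMod n) : (r i) ^ n = 1 := by
  rw [r_pow, ZMod.natCast_self, zero_mul, one_def]

/-- The rotation subgroup of the dihedral group. -/
def rot (n : ℕ) : Subgroup (DihedralGroup n) where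
  carrier := {x | ∃ i, x = r i}
  mul_mem' := by rintro _ _ ⟨i, rfl⟩ ⟨j, rfl⟩; exact ⟨i + j, rfl⟩
  one_mem' := ⟨0, rfl⟩
  inv_mem' := by rintro _ ⟨i, rfl⟩; exact ⟨-i, rfl⟩

lemma mem_rot {x : DihedralGroup n} : x ∈ rot n ↔ ∃ i, x = r i := Iff.rfl

lemma rot_comm : IsMulCommutative (rot n) := by
  constructor
  constructor
  rintro ⟨_, i, rfl⟩ ⟨_, j, rfl⟩
  ext
  show r i * r j = r j * r i
  rw [r_mul_r, r_mul_r, add_comm]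

end PNCAux

open DihedralGroup PNCAux in
/-- For `n ≥ 2`, the dihedral group of order `2 * n` is a PNC-group iff `n` is a prime
power `p ^ k` with `k ≥ 1`. -/
theorem dihedralGroup_isPNCGroup_iff (n : ℕ) (hn : 2 ≤ n) :
    IsPNCGroup (DihedralGroup n) ↔ ∃ (p k : ℕ), p.Prime ∧ 0 < k ∧ n = p ^ k := by
  haveI : NeZero n := ⟨by omega⟩
  constructor
  · intro hpnc
    by_contra hno
    push_neg at hno
    -- the rotation subgroup is abelian and not a q-group for any q
    have hnotp : ∀ p : ℕ, p.Prime → ¬ IsPGroup p (rot n) := by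
      intro p hp hP
      obtain ⟨k, hk⟩ := hP ⟨r 1, ⟨1, rfl⟩⟩
      have hk' : (r 1 : DihedralGroup n) ^ p ^ k = 1 := by
        have := congrArg (Subtype.val) hk
        simpa using this
      have hdvd : n ∣ p ^ k := by
        have := orderOf_dvd_of_pow_eq_one hk'
        rwa [orderOf_r_one] at this
      obtain ⟨m, _, hm⟩ := (Nat.dvd_prime_pow hp).mp hdvd
      have hm0 : 0 < m := by
        rcases Nat.eq_zero_or_pos m with h0 | h0
        · subst h0; simp at hm; omega
        · exact h0
      exact hno p m hp hm0 hm
    have heq := hpnc (rot n) rot_comm hnotp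
    -- sr 0 is in the normalizer of the rotation subgroup
    have hnorm : (sr 0 : DihedralGroup n) ∈ Subgroup.normalizer (rot n : Set (DihedralGroup n)) := by
      rw [Subgroup.mem_normalizer_iff]
      rintro (j | j)
      · constructor
        · rintro -
          exact ⟨0 - (0 + j), by rw [sr_inv, sr_mul_r, sr_mul_sr]⟩
        · rintro -
          exact ⟨j, rfl⟩
      · constructor
        · rintro ⟨i, h⟩; exact absurd h (by simp)
        · rintro ⟨i, h⟩
          rw [sr_inv, sr_mul_sr, r_mul_sr] at h
          exact absurd h (by simp)
    rw [heq] at hnorm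
    have hcomm := (Subgroup.mem_centralizer_iff.mp hnorm) (r 1) ⟨1, rfl⟩
    -- r 1 * sr 0 = sr 0 * r 1 forces n ∣ 2
    rw [r_mul_sr, sr_mul_r] at hcomm
    have h1 : (0 - 1 : ZMod n) = 0 + 1 := by
      injection hcomm
    have h2 : ((2 : ℕ) : ZMod n) = 0 := by
      push_cast
      linear_combination -h1
    have hd := (ZMod.natCast_eq_zero_iff 2 n).mp h2
    have hle : n ≤ 2 := Nat.le_of_dvd two_pos hd
    have hn2 : n = 2 := by omega
    exact hno 2 1 Nat.prime_two one_pos (by omega)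
  · rintro ⟨p, k, hp, hk, rfl⟩
    intro H hHcomm hHnot
    exfalso
    by_cases hs : ∃ j : ZMod (p ^ k), sr j ∈ H
    · -- H contains a reflection: every element squares to 1, so H is a 2-group
      obtain ⟨j, hj⟩ := hs
      refine hHnot 2 Nat.prime_two ?_
      intro g
      refine ⟨1, ?_⟩
      have hg2 : (g : DihedralGroup (p ^ k)) ^ 2 = 1 := by
        obtain ⟨x, hx⟩ := g
        rw [pow_two]
        rcases x with i | i
        · -- rotation in H commutes with sr j
          have := hHcomm.is_comm.comm ⟨r i, hx⟩ ⟨sr j, hj⟩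
          have hc : (r i : DihedralGroup (p ^ k)) * sr j = sr j * r i :=
            congrArg Subtype.val this
          rw [r_mul_sr, sr_mul_r] at hc
          have h1 : (j - i : ZMod (p ^ k)) = j + i := by injection hc
          have h2 : (i + i : ZMod (p ^ k)) = 0 := by linear_combination -h1
          show (r i * r i : DihedralGroup (p ^ k)) = 1
          rw [r_mul_r, h2, one_def]
        · show (sr i * sr i : DihedralGroup (p ^ k)) = 1
          rw [sr_mul_sr, sub_self, one_def]
      ext
      rw [pow_one]
      simpa using hg2
    · -- H consists of rotations: it is a p-group
      push_neg at hs
      refine hHnot p hp ?_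
      intro g
      refine ⟨k, ?_⟩
      obtain ⟨x, hx⟩ := g
      rcases x with i | i
      · ext
        show (r i : DihedralGroup (p ^ k)) ^ p ^ k = 1
        exact r_pow_n i
      · exact absurd hx (hs i)
end
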